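/- arXiv:1911.11656 — 10 statements merged into one kernel-verified Lean document; each statement's English description precedes it below -/
import Mathlib

section
/- Let (a_n)_{n≥0}, (b_n)_{n≥0}, (θ_n)_{n≥0}, (ε_n)_{n≥0} be real sequences with a_n ≥ 0 for all n, satisfying a_{n+1} ≤ (1 − θ_n) a_n + θ_n b_n + ε_n for all n ≥ 0, where (i) 0 ≤ θ_n ≤ 1 for all n ≥ 0 and Σ_{n≥0} θ_n = +∞; (ii) limsup_{n→+∞} b_n ≤ 0; (iii) ε_n ≥ 0 for all n ≥ 0 and Σ_{n≥0} ε_n < +∞. Then a_n → 0 as n → +∞. -/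
open Filter Finset

lemma aux_prod_tendsto {θ : ℕ → ℝ} (hθ0 : ∀ n, 0 ≤ θ n) (hθ1 : ∀ n, θ n ≤ 1)
    (hθdiv : ¬ Summable θ) (N : ℕ) :
    Tendsto (fun n => ∏ k ∈ range n, (1 - θ (N + k))) atTop (nhds 0) := by
  have hdiv' : ¬ Summable fun k => θ (k + N) := by
    rw [summable_nat_add_iff]; exact hθdiv
  have hsum : Tendsto (fun n => ∑ k ∈ range n, θ (k + N)) atTop atTop := by
    rwa [← not_summable_iff_tendsto_nat_atTop_of_nonneg (fun n => hθ0 _)]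
  have hexp : Tendsto (fun n => Real.exp (-(∑ k ∈ range n, θ (k + N)))) atTop (nhds 0) :=
    Real.tendsto_exp_neg_atTop_nhds_zero.comp hsum
  refine squeeze_zero (fun n => Finset.prod_nonneg fun k _ => by linarith [hθ1 (N + k)])
    (fun n => ?_) hexp
  calc ∏ k ∈ range n, (1 - θ (N + k)) ≤ ∏ k ∈ range n, Real.exp (-θ (N + k)) := by
        refine Finset.prod_le_prod (fun k _ => by linarith [hθ1 (N + k)]) (fun k _ => ?_)
        linarith [Real.add_one_le_exp (-θ (N + k))]
    _ = Real.exp (-∑ k ∈ range n, θ (k + N)) := by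
        rw [← Real.exp_sum, ← Finset.sum_neg_distrib]
        congr 1
        exact Finset.sum_congr rfl fun k _ => by rw [Nat.add_comm]

/-- quasi-Fejér-type real sequence lemma (Xu). -/
theorem stmt_0 (a b θ ε : ℕ → ℝ)
    (ha : ∀ n, 0 ≤ a n)
    (hrec : ∀ n, a (n + 1) ≤ (1 - θ n) * a n + θ n * b n + ε n)
    (hθ0 : ∀ n, 0 ≤ θ n) (hθ1 : ∀ n, θ n ≤ 1)
    (hθdiv : ¬ Summable θ)
    (hb : ∀ δ : ℝ, 0 < δ → ∀ᶠ n in Filter.atTop, b n ≤ δ)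
    (hε0 : ∀ n, 0 ≤ ε n) (hεsum : Summable ε) :
    Filter.Tendsto a Filter.atTop (nhds 0) := by
  rw [Metric.tendsto_atTop]
  intro η hη
  set δ := η / 4 with hδdef
  have hδ : 0 < δ := by positivity
  -- choose N such that b n ≤ δ for n ≥ N and tail sum of ε at N is ≤ δ
  have htail : Tendsto (fun i => ∑' k, ε (k + i)) atTop (nhds 0) :=
    tendsto_sum_nat_add ε
  have hev : ∀ᶠ N in atTop, (∀ n ≥ N, b n ≤ δ) ∧ ∑' k, ε (k + N) ≤ δ := by
    filter_upwards [eventually_forall_ge_atTop.2 (hb δ hδ),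
      htail.eventually (eventually_le_nhds hδ)] with N h1 h2
    exact ⟨h1, h2⟩
  obtain ⟨N, hN1, hN2⟩ := hev.exists
  -- key induction
  have key : ∀ n, a (N + n) ≤ (∏ k ∈ range n, (1 - θ (N + k))) * a N + δ
      + ∑ k ∈ range n, ε (N + k) := by
    intro n
    induction n with
    | zero => simp; nlinarith [ha N]
    | succ n ih =>
      have hθn0 := hθ0 (N + n); have hθn1 := hθ1 (N + n)
      have hbn : b (N + n) ≤ δ := hN1 _ (Nat.le_add_right _ _)
      have hrn := hrec (N + n)
      have hprod0 : 0 ≤ ∏ k ∈ range n, (1 - θ (N + k)) :=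
        Finset.prod_nonneg fun k _ => by linarith [hθ1 (N + k)]
      have hsum0 : 0 ≤ ∑ k ∈ range n, ε (N + k) :=
        Finset.sum_nonneg fun k _ => hε0 _
    
      have heq : N + n + 1 = N + (n + 1) := by ring
      rw [Finset.prod_range_succ, Finset.sum_range_succ]
      have han0 := ha (N + n)
      calc a (N + (n + 1)) = a (N + n + 1) := by rw [heq]
        _ ≤ (1 - θ (N + n)) * a (N + n) + θ (N + n) * b (N + n) + ε (N + n) := hrn
        _ ≤ (1 - θ (N + n)) * ((∏ k ∈ range n, (1 - θ (N + k))) * a N + δ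
              + ∑ k ∈ range n, ε (N + k)) + θ (N + n) * δ + ε (N + n) := by
            have h1 : (1 - θ (N + n)) * a (N + n) ≤ (1 - θ (N + n)) *
                ((∏ k ∈ range n, (1 - θ (N + k))) * a N + δ + ∑ k ∈ range n, ε (N + k)) :=
              mul_le_mul_of_nonneg_left ih (by linarith)
            have h2 : θ (N + n) * b (N + n) ≤ θ (N + n) * δ :=
              mul_le_mul_of_nonneg_left hbn hθn0
            linarith
        _ ≤ (∏ k ∈ range n, (1 - θ (N + k))) * (1 - θ (N + n)) * a N + δ
              + (∑ k ∈ range n, ε (N + k) + ε (N + n)) := by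
            have h3 : (1 - θ (N + n)) * (∑ k ∈ range n, ε (N + k)) ≤
                ∑ k ∈ range n, ε (N + k) := by nlinarith
            nlinarith [ha N]
  -- product * a N eventually ≤ δ
  have hprod := aux_prod_tendsto hθ0 hθ1 hθdiv N
  have hmul : Tendsto (fun n => (∏ k ∈ range n, (1 - θ (N + k))) * a N) atTop (nhds 0) := by
    simpa using hprod.mul_const (a N)
  obtain ⟨M, hM⟩ := (Metric.tendsto_atTop.1 hmul) δ hδ
  refine ⟨N + M, fun m hm => ?_⟩
  obtain ⟨n, rfl⟩ := Nat.exists_eq_add_of_le (le_trans (Nat.le_add_right N M) hm)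
  have hn : M ≤ n := by omega
  have h1 : (∏ k ∈ range n, (1 - θ (N + k))) * a N ≤ δ := by
    have := hM n hn
    rw [Real.dist_eq, sub_zero] at this
    exact (le_abs_self _).trans this.le
  have h2 : ∑ k ∈ range n, ε (N + k) ≤ δ := by
    have h3 : ∑ k ∈ range n, ε (N + k) ≤ ∑' k, ε (k + N) := by
      have := Summable.sum_le_tsum (range n) (fun k _ => hε0 (k + N))
        ((summable_nat_add_iff N).2 hεsum)
      simpa [Nat.add_comm] using this
    linarith
  have := key n
  rw [Real.dist_eq, sub_zero, abs_of_nonneg (ha _)]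
  calc a (N + n) ≤ δ + δ + δ := by linarith
    _ < η := by rw [hδdef]; linarith
end

section
/- Let H be a real Hilbert space, (T_n)_{n≥0} a sequence of nonexpansive operators T_n : H → H, and x a common fixed point of all T_n. Let (x_n)_{n≥0} be generated by x_{n+1} = β_n x_n + λ_n (T_n(β_n x_n) − β_n x_n) for all n ≥ 0 from a starting point x_0 ∈ H, where 0 < β_n ≤ 1 and 0 < λ_n ≤ 1 for all n ≥ 0. Then ‖x_n − x‖ ≤ max{‖x_0 − x‖, ‖x‖} for all n ≥ 0; in particular the sequence (x_n)_{n≥0} is bounded. -/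
open scoped RealInnerProductSpace

/-- boundedness of the Tikhonov-regularized Krasnosel'skiĭ–Mann iterates. -/
theorem stmt_1 {H : Type*} [NormedAddCommGroup H] [InnerProductSpace ℝ H] [CompleteSpace H]
    (T : ℕ → H → H) (hT : ∀ n x y, ‖T n x - T n y‖ ≤ ‖x - y‖)
    (x : H) (hx : ∀ n, T n x = x)
    (β lam : ℕ → ℝ)
    (hβ : ∀ n, 0 < β n ∧ β n ≤ 1) (hlam : ∀ n, 0 < lam n ∧ lam n ≤ 1)
    (u : ℕ → H)
    (hrec : ∀ n, u (n + 1) = β n • u n + lam n • (T n (β n • u n) - β n • u n)) :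
    (∀ n, ‖u n - x‖ ≤ max ‖u 0 - x‖ ‖x‖) ∧ (∃ M : ℝ, ∀ n, ‖u n‖ ≤ M) := by
  set M := max ‖u 0 - x‖ ‖x‖ with hM
  have hxM : ‖x‖ ≤ M := le_max_right _ _
  have hmain : ∀ n, ‖u n - x‖ ≤ M := by
    intro n
    induction n with
    | zero => exact le_max_left _ _
    | succ n ih =>
      obtain ⟨hβ0, hβ1⟩ := hβ n
      obtain ⟨hl0, hl1⟩ := hlam n
      have key : u (n + 1) - x = (1 - lam n) • (β n • u n - x)
          + lam n • (T n (β n • u n) - x) := by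
        rw [hrec n]; module
      have hTx : ‖T n (β n • u n) - x‖ ≤ ‖β n • u n - x‖ := by
        calc ‖T n (β n • u n) - x‖ = ‖T n (β n • u n) - T n x‖ := by rw [hx n]
        _ ≤ ‖β n • u n - x‖ := hT n _ _
      have hβb : ‖β n • u n - x‖ ≤ M := by
        have h1 : β n • u n - x = β n • (u n - x) - (1 - β n) • x := by module
        calc ‖β n • u n - x‖ ≤ ‖β n • (u n - x)‖ + ‖(1 - β n) • x‖ := by
              rw [h1]; exact norm_sub_le _ _
        _ = β n * ‖u n - x‖ + (1 - β n) * ‖x‖ := by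
              rw [norm_smul, norm_smul, Real.norm_eq_abs, Real.norm_eq_abs,
                abs_of_pos hβ0, abs_of_nonneg (by linarith)]
        _ ≤ β n * M + (1 - β n) * M := by
              have := mul_le_mul_of_nonneg_left ih hβ0.le
              have := mul_le_mul_of_nonneg_left hxM (by linarith : (0:ℝ) ≤ 1 - β n)
              linarith
        _ = M := by ring
      calc ‖u (n + 1) - x‖ ≤ ‖(1 - lam n) • (β n • u n - x)‖
            + ‖lam n • (T n (β n • u n) - x)‖ := by rw [key]; exact norm_add_le _ _
      _ = (1 - lam n) * ‖β n • u n - x‖ + lam n * ‖T n (β n • u n) - x‖ := by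
            rw [norm_smul, norm_smul, Real.norm_eq_abs, Real.norm_eq_abs,
              abs_of_nonneg (by linarith), abs_of_pos hl0]
      _ ≤ (1 - lam n) * M + lam n * M := by
            have h2 := hTx.trans hβb
            have := mul_le_mul_of_nonneg_left hβb (by linarith : (0:ℝ) ≤ 1 - lam n)
            have := mul_le_mul_of_nonneg_left h2 hl0.le
            linarith
      _ = M := by ring
  refine ⟨hmain, ⟨M + ‖x‖, fun n => ?_⟩⟩
  calc ‖u n‖ = ‖u n - x + x‖ := by rw [sub_add_cancel]
  _ ≤ ‖u n - x‖ + ‖x‖ := norm_add_le _ _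
  _ ≤ M + ‖x‖ := by linarith [hmain n]
end

section
/- Let H be a real Hilbert space and (T_n)_{n≥0} a sequence of nonexpansive operators T_n : H → H having a common fixed point. Let (x_n)_{n≥0} be generated by x_{n+1} = β_n x_n + λ_n (T_n(β_n x_n) − β_n x_n) for all n ≥ 0 from a starting point x_0 ∈ H, where (i) 0 < β_n ≤ 1 for all n ≥ 0, β_n → 1, Σ_{n≥0}(1 − β_n) = +∞, and Σ_{n≥1} |β_n − β_{n−1}| < +∞; (ii) 0 < λ_n ≤ 1 for all n ≥ 0, liminf_{n→+∞} λ_n > 0, and Σ_{n≥1} |λ_n − λ_{n−1}| < +∞; (iii) Σ_{n≥1} ‖T_n(β_{n−1} x_{n−1}) − T_{n−1}(β_{n−1} x_{n−1})‖ < +∞. Then ‖x_{n+1} − x_n‖ → 0 as n → +∞. -/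
open Filter

lemma key_rec_lemma (s a c : ℕ → ℝ) (hs : ∀ n, 0 ≤ s n)
    (ha0 : ∀ n, 0 ≤ a n) (hc0 : ∀ n, 0 ≤ c n)
    (hcs : Summable c) (hadiv : ¬ Summable a)
    (hrec : ∀ n, s (n + 1) ≤ (1 - a n) * s n + c n) :
    Tendsto s atTop (nhds 0) := by
  set S := ∑' n, c n with hS
  set R : ℕ → ℝ := fun n => ∑' i, c (i + n) with hR
  have hRf : ∀ n, R n = S - ∑ i ∈ Finset.range n, c i := by
    intro n
    have h := Summable.sum_add_tsum_nat_add n hcs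
    simp only [hR, hS]
    linarith [h]
  have hR0 : Tendsto R atTop (nhds 0) := by
    have h1 : Tendsto (fun n => ∑ i ∈ Finset.range n, c i) atTop (nhds S) :=
      hcs.hasSum.tendsto_sum_nat
    have : Tendsto (fun n => S - ∑ i ∈ Finset.range n, c i) atTop (nhds (S - S)) :=
      tendsto_const_nhds.sub h1
    rw [show (0:ℝ) = S - S by ring]
    exact Tendsto.congr (fun n => (hRf n).symm) this
  have hRnn : ∀ n, 0 ≤ R n := fun n => tsum_nonneg (fun i => hc0 _)
  have hRstep : ∀ n, R n = c n + R (n + 1) := by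
    intro n
    have h1 := hRf n
    have h2 := hRf (n + 1)
    rw [Finset.sum_range_succ] at h2
    linarith
  set t : ℕ → ℝ := fun n => s n + R n with ht
  have htanti : Antitone t := by
    apply antitone_nat_of_succ_le
    intro n
    have h1 := hrec n
    have h2 : (1 - a n) * s n ≤ s n := by nlinarith [ha0 n, hs n]
    have := hRstep n
    simp only [ht]
    linarith
  have htbdd : BddBelow (Set.range t) := by
    refine ⟨0, ?_⟩
    rintro x ⟨n, rfl⟩
    exact add_nonneg (hs n) (hRnn n)
  set L := ⨅ n, t n with hL
  have htL : Tendsto t atTop (nhds L) := tendsto_atTop_ciInf htanti htbdd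
  have hsL : Tendsto s atTop (nhds L) := by
    have : Tendsto (fun n => t n - R n) atTop (nhds (L - 0)) := htL.sub hR0
    simpa [ht] using this
  have hL0 : 0 ≤ L := le_of_tendsto_of_tendsto' tendsto_const_nhds hsL hs
  have hLle : L ≤ 0 := by
    by_contra hpos
    push_neg at hpos
    -- eventually s n ≥ L / 2
    have hev : ∀ᶠ n in atTop, L / 2 ≤ s n := by
      exact hsL.eventually (eventually_ge_nhds (by linarith))
    obtain ⟨N, hN⟩ := eventually_atTop.1 hev
    -- telescoping inequality
    have hstep : ∀ n, N ≤ n → s (n + 1) ≤ s n - L / 2 * a n + c n := by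
      intro n hn
      have h1 := hrec n
      have h2 : L / 2 * a n ≤ s n * a n :=
        mul_le_mul_of_nonneg_right (hN n hn) (ha0 n)
      nlinarith
    have htel : ∀ m, s (N + m) ≤ s N - L / 2 * (∑ k ∈ Finset.range m, a (N + k))
        + ∑ k ∈ Finset.range m, c (N + k) := by
      intro m
      induction m with
      | zero => simp
      | succ m ih =>
        have h1 := hstep (N + m) (Nat.le_add_right _ _)
        rw [Finset.sum_range_succ, Finset.sum_range_succ]
        have : N + m + 1 = N + (m + 1) := by ring
        rw [this] at h1
        linarith
    -- partial sums of shifted a tend to infinity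
    have hadiv' : ¬ Summable (fun k => a (N + k)) := by
      intro h
      exact hadiv ((summable_nat_add_iff N).1 (by simpa [Nat.add_comm] using h))
    have hatop : Tendsto (fun m => ∑ k ∈ Finset.range m, a (N + k)) atTop atTop := by
      rcases not_summable_iff_tendsto_nat_atTop_of_nonneg (fun k => ha0 (N + k)) with ⟨h, _⟩
      exact h hadiv'
    have hcb : ∀ m, ∑ k ∈ Finset.range m, c (N + k) ≤ S := by
      intro m
      calc ∑ k ∈ Finset.range m, c (N + k)
          ≤ ∑' k, c (N + k) := Summable.sum_le_tsum _ (fun i _ => hc0 _)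
            ((summable_nat_add_iff N).2 hcs |>.congr (fun k => by rw [Nat.add_comm]))
        _ ≤ S := Summable.tsum_le_tsum_of_inj (fun k => N + k) (add_right_injective N)
            (fun i _ => hc0 i) (fun k => le_refl _)
            (((summable_nat_add_iff N).2 hcs).congr (fun k => by rw [Nat.add_comm])) hcs
    -- contradiction: L/2 * A_m ≤ s N + S for all m
    have hbdd : ∀ m, L / 2 * (∑ k ∈ Finset.range m, a (N + k)) ≤ s N + S := by
      intro m
      have := htel m
      have := hs (N + m)
      have := hcb m
      linarith
    obtain ⟨m, hm⟩ := (hatop.eventually_ge_atTop ((s N + S + 1) / (L / 2))).exists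
    have : s N + S + 1 ≤ L / 2 * (∑ k ∈ Finset.range m, a (N + k)) := by
      rw [div_le_iff₀ (by linarith)] at hm
      linarith [hm]
    linarith [hbdd m]
  have hLz : L = 0 := le_antisymm hLle hL0
  rwa [hLz] at hsL



/-- asymptotic regularity of successive iterates, `‖x_{n+1} - x_n‖ → 0`. -/
theorem stmt_2 {H : Type*} [NormedAddCommGroup H] [InnerProductSpace ℝ H] [CompleteSpace H]
    (T : ℕ → H → H) (hT : ∀ n x y, ‖T n x - T n y‖ ≤ ‖x - y‖)
    (hfix : ∃ p : H, ∀ n, T n p = p)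
    (β lam : ℕ → ℝ) (u : ℕ → H)
    (hrec : ∀ n, u (n + 1) = β n • u n + lam n • (T n (β n • u n) - β n • u n))
    (hβ : ∀ n, 0 < β n ∧ β n ≤ 1)
    (hβlim : Filter.Tendsto β Filter.atTop (nhds 1))
    (hβdiv : ¬ Summable (fun n => 1 - β n))
    (hβsum : Summable (fun n => |β (n + 1) - β n|))
    (hlam : ∀ n, 0 < lam n ∧ lam n ≤ 1)
    (hlaminf : ∃ c : ℝ, 0 < c ∧ ∀ᶠ n in Filter.atTop, c ≤ lam n)
    (hlamsum : Summable (fun n => |lam (n + 1) - lam n|))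
    (hTsum : Summable (fun n => ‖T (n + 1) (β n • u n) - T n (β n • u n)‖)) :
    Filter.Tendsto (fun n => ‖u (n + 1) - u n‖) Filter.atTop (nhds 0) := by
  obtain ⟨p, hp⟩ := hfix
  set M : ℝ := max ‖u 0 - p‖ ‖p‖ with hM
  have hMp : ‖p‖ ≤ M := le_max_right _ _
  have hM0 : 0 ≤ M := le_trans (norm_nonneg p) hMp
  set y : ℕ → H := fun n => β n • u n with hy
  -- ‖y n - p‖ ≤ β n * ‖u n - p‖ + (1 - β n) * ‖p‖
  have hyp : ∀ n, ‖u n - p‖ ≤ M → ‖y n - p‖ ≤ M := by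
    intro n hn
    have h1 : y n - p = β n • (u n - p) + (β n - 1) • p := by
      simp only [hy]; module
    have h2 : ‖y n - p‖ ≤ β n * ‖u n - p‖ + (1 - β n) * ‖p‖ := by
      rw [h1]
      calc ‖β n • (u n - p) + (β n - 1) • p‖
          ≤ ‖β n • (u n - p)‖ + ‖(β n - 1) • p‖ := norm_add_le _ _
        _ = |β n| * ‖u n - p‖ + |β n - 1| * ‖p‖ := by rw [norm_smul, norm_smul]; simp
        _ = β n * ‖u n - p‖ + (1 - β n) * ‖p‖ := by
            rw [abs_of_pos (hβ n).1, abs_of_nonpos (by linarith [(hβ n).2])]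
            ring_nf
    have h3 : β n * ‖u n - p‖ ≤ β n * M :=
      mul_le_mul_of_nonneg_left hn (le_of_lt (hβ n).1)
    have h4 : (1 - β n) * ‖p‖ ≤ (1 - β n) * M :=
      mul_le_mul_of_nonneg_left hMp (by linarith [(hβ n).2])
    nlinarith
  have hup : ∀ n, ‖u n - p‖ ≤ M := by
    intro n
    induction n with
    | zero => exact le_max_left _ _
    | succ n ih =>
      have hynp := hyp n ih
      have h1 : u (n + 1) - p = (1 - lam n) • (y n - p) + lam n • (T n (y n) - p) := by
        rw [hrec n]
        simp only [hy]
        module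
      have h2 : ‖T n (y n) - p‖ ≤ ‖y n - p‖ := by
        conv_lhs => rw [show p = T n p from (hp n).symm]
        exact hT n _ _
      calc ‖u (n + 1) - p‖ = ‖(1 - lam n) • (y n - p) + lam n • (T n (y n) - p)‖ := by rw [h1]
        _ ≤ ‖(1 - lam n) • (y n - p)‖ + ‖lam n • (T n (y n) - p)‖ := norm_add_le _ _
        _ = |1 - lam n| * ‖y n - p‖ + |lam n| * ‖T n (y n) - p‖ := by
            rw [norm_smul, norm_smul]; simp
        _ = (1 - lam n) * ‖y n - p‖ + lam n * ‖T n (y n) - p‖ := by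
            rw [abs_of_nonneg (by linarith [(hlam n).2]), abs_of_pos (hlam n).1]
        _ ≤ (1 - lam n) * ‖y n - p‖ + lam n * ‖y n - p‖ := by
            nlinarith [(hlam n).1, h2]
        _ = ‖y n - p‖ := by ring
        _ ≤ M := hynp
  -- bounds
  have hub : ∀ n, ‖u n‖ ≤ M + ‖p‖ := by
    intro n
    have h := norm_add_le (u n - p) p
    simp only [sub_add_cancel] at h
    linarith [hup n]
  have hTyb : ∀ n, ‖T n (y n) - y n‖ ≤ 2 * M := by
    intro n
    have h2 : ‖T n (y n) - p‖ ≤ ‖y n - p‖ := by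
      conv_lhs => rw [show p = T n p from (hp n).symm]
      exact hT n _ _
    have h3 := hyp n (hup n)
    have h := norm_sub_le (T n (y n) - p) (y n - p)
    rw [sub_sub_sub_cancel_right] at h
    linarith
  set B : ℝ := M + ‖p‖ with hB
  have hB0 : 0 ≤ B := add_nonneg hM0 (norm_nonneg p)
  set s : ℕ → ℝ := fun n => ‖u (n + 1) - u n‖ with hs
  set a : ℕ → ℝ := fun n => 1 - β (n + 1) with ha
  set c : ℕ → ℝ := fun n => |β (n + 1) - β n| * B
      + ‖T (n + 1) (β n • u n) - T n (β n • u n)‖ + |lam (n + 1) - lam n| * (2 * M) with hc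
  have key : ∀ n, s (n + 1) ≤ (1 - a n) * s n + c n := by
    intro n
    have hdec : u (n + 2) - u (n + 1)
        = (1 - lam (n + 1)) • (y (n + 1) - y n)
          + lam (n + 1) • (T (n + 1) (y (n + 1)) - T (n + 1) (y n))
          + lam (n + 1) • (T (n + 1) (y n) - T n (y n))
          + (lam (n + 1) - lam n) • (T n (y n) - y n) := by
      have e := hrec (n + 1)
      rw [show n + 1 + 1 = n + 2 from rfl] at e
      rw [e]
      simp only [hy]
      rw [hrec n]
      module
    have hyd : y (n + 1) - y n = β (n + 1) • (u (n + 1) - u n) + (β (n + 1) - β n) • u n := by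
      simp only [hy]; module
    have h1 : ‖y (n + 1) - y n‖ ≤ β (n + 1) * s n + |β (n + 1) - β n| * B := by
      rw [hyd]
      calc ‖β (n + 1) • (u (n + 1) - u n) + (β (n + 1) - β n) • u n‖
          ≤ ‖β (n + 1) • (u (n + 1) - u n)‖ + ‖(β (n + 1) - β n) • u n‖ := norm_add_le _ _
        _ = |β (n + 1)| * ‖u (n + 1) - u n‖ + |β (n + 1) - β n| * ‖u n‖ := by
            rw [norm_smul, norm_smul]; simp
        _ ≤ β (n + 1) * s n + |β (n + 1) - β n| * B := by
            rw [abs_of_pos (hβ (n + 1)).1]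
            have := mul_le_mul_of_nonneg_left (hub n) (abs_nonneg (β (n + 1) - β n))
            simp only [hs]
            linarith
    have h2 : ‖T (n + 1) (y (n + 1)) - T (n + 1) (y n)‖ ≤ ‖y (n + 1) - y n‖ := hT _ _ _
    have hl1 := (hlam (n + 1)).1
    have hl2 := (hlam (n + 1)).2
    have hbb1 := (hβ (n + 1)).1
    have hbb2 := (hβ (n + 1)).2
    have hsn : 0 ≤ s n := norm_nonneg _
    calc s (n + 1) = ‖u (n + 2) - u (n + 1)‖ := rfl
      _ ≤ ‖(1 - lam (n + 1)) • (y (n + 1) - y n)‖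
          + ‖lam (n + 1) • (T (n + 1) (y (n + 1)) - T (n + 1) (y n))‖
          + ‖lam (n + 1) • (T (n + 1) (y n) - T n (y n))‖
          + ‖(lam (n + 1) - lam n) • (T n (y n) - y n)‖ := by
            rw [hdec]
            exact le_trans (norm_add_le _ _) (by
              have h := norm_add_le ((1 - lam (n + 1)) • (y (n + 1) - y n)
                + lam (n + 1) • (T (n + 1) (y (n + 1)) - T (n + 1) (y n)))
                (lam (n + 1) • (T (n + 1) (y n) - T n (y n)))
              have h' := norm_add_le ((1 - lam (n + 1)) • (y (n + 1) - y n))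
                (lam (n + 1) • (T (n + 1) (y (n + 1)) - T (n + 1) (y n)))
              linarith)
      _ = |1 - lam (n + 1)| * ‖y (n + 1) - y n‖
          + |lam (n + 1)| * ‖T (n + 1) (y (n + 1)) - T (n + 1) (y n)‖
          + |lam (n + 1)| * ‖T (n + 1) (y n) - T n (y n)‖
          + |lam (n + 1) - lam n| * ‖T n (y n) - y n‖ := by
            simp [norm_smul]
      _ ≤ (1 - lam (n + 1)) * ‖y (n + 1) - y n‖
          + lam (n + 1) * ‖y (n + 1) - y n‖
          + 1 * ‖T (n + 1) (y n) - T n (y n)‖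
          + |lam (n + 1) - lam n| * (2 * M) := by
            rw [abs_of_nonneg (by linarith), abs_of_pos hl1]
            have e2 : lam (n + 1) * ‖T (n + 1) (y (n + 1)) - T (n + 1) (y n)‖
                ≤ lam (n + 1) * ‖y (n + 1) - y n‖ :=
              mul_le_mul_of_nonneg_left h2 (le_of_lt hl1)
            have e3 : lam (n + 1) * ‖T (n + 1) (y n) - T n (y n)‖
                ≤ 1 * ‖T (n + 1) (y n) - T n (y n)‖ :=
              mul_le_mul_of_nonneg_right hl2 (norm_nonneg _)
            have e4 : |lam (n + 1) - lam n| * ‖T n (y n) - y n‖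
                ≤ |lam (n + 1) - lam n| * (2 * M) :=
              mul_le_mul_of_nonneg_left (hTyb n) (abs_nonneg _)
            linarith
      _ = ‖y (n + 1) - y n‖ + ‖T (n + 1) (y n) - T n (y n)‖
          + |lam (n + 1) - lam n| * (2 * M) := by ring
      _ ≤ (β (n + 1) * s n + |β (n + 1) - β n| * B) + ‖T (n + 1) (y n) - T n (y n)‖
          + |lam (n + 1) - lam n| * (2 * M) := by linarith
      _ = (1 - a n) * s n + c n := by simp only [ha, hc, hy]; ring
  have hc0 : ∀ n, 0 ≤ c n := by
    intro n
    have := abs_nonneg (β (n + 1) - β n)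
    have := abs_nonneg (lam (n + 1) - lam n)
    have := norm_nonneg (T (n + 1) (β n • u n) - T n (β n • u n))
    positivity
  have hcs : Summable c := ((hβsum.mul_right B).add hTsum).add (hlamsum.mul_right (2 * M))
  have ha0 : ∀ n, 0 ≤ a n := fun n => by simp only [ha]; linarith [(hβ (n + 1)).2]
  have hadiv : ¬ Summable a := by
    intro h
    exact hβdiv ((summable_nat_add_iff 1).1 h)
  exact key_rec_lemma s a c (fun n => norm_nonneg _) ha0 hc0 hcs hadiv key
end

section
/- Let H be a real Hilbert space and (T_n)_{n≥0} a sequence of nonexpansive operators T_n : H → H having a common fixed point. Let (x_n)_{n≥0} be generated by x_{n+1} = β_n x_n + λ_n (T_n(β_n x_n) − β_n x_n) for all n ≥ 0 from a starting point x_0 ∈ H, where (i) 0 < β_n ≤ 1 for all n ≥ 0, β_n → 1, Σ_{n≥0}(1 − β_n) = +∞, and Σ_{n≥1} |β_n − β_{n−1}| < +∞; (ii) 0 < λ_n ≤ 1 for all n ≥ 0, liminf_{n→+∞} λ_n > 0, and Σ_{n≥1} |λ_n − λ_{n−1}| < +∞; (iii) Σ_{n≥1} ‖T_n(β_{n−1}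 x_{n−1}) − T_{n−1}(β_{n−1} x_{n−1})‖ < +∞. Then ‖x_n − T_n x_n‖ → 0 as n → +∞. -/
open Filter Finset

/-- Xu's lemma: if `a (n+1) ≤ (1 - γ n) * a n + c n` with `γ n ∈ [0,1]`,
`∑ γ = ∞` and `∑ c < ∞`, then `a n → 0`. -/
lemma xu_lemma (a γ c : ℕ → ℝ) (ha : ∀ n, 0 ≤ a n)
    (hγ0 : ∀ n, 0 ≤ γ n) (hγ1 : ∀ n, γ n ≤ 1)
    (hdiv : Tendsto (fun n => ∑ k ∈ range n, γ k) atTop atTop)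
    (hc0 : ∀ n, 0 ≤ c n) (hcs : Summable c)
    (hrec : ∀ n, a (n + 1) ≤ (1 - γ n) * a n + c n) :
    Tendsto a atTop (nhds 0) := by
  have key : ∀ m n, m ≤ n →
      a n ≤ (∏ k ∈ Ico m n, (1 - γ k)) * a m + ∑ k ∈ Ico m n, c k := by
    intro m n h
    induction n, h using Nat.le_induction with
    | base => simp
    | succ n hmn ih =>
      have hS : 0 ≤ ∑ k ∈ Ico m n, c k := Finset.sum_nonneg fun k _ => hc0 k
      have h1 : 0 ≤ 1 - γ n := by linarith [hγ1 n]
      calc a (n + 1) ≤ (1 - γ n) * a n + c n := hrec n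
        _ ≤ (1 - γ n) * ((∏ k ∈ Ico m n, (1 - γ k)) * a m + ∑ k ∈ Ico m n, c k) + c n := by
            gcongr
        _ ≤ (∏ k ∈ Ico m (n + 1), (1 - γ k)) * a m + ∑ k ∈ Ico m (n + 1), c k := by
            rw [Finset.prod_Ico_succ_top hmn, Finset.sum_Ico_succ_top hmn]
            have := mul_nonneg hS (hγ0 n)
            nlinarith [hγ0 n]
  have hprod : ∀ m, Tendsto (fun n => (∏ k ∈ Ico m n, (1 - γ k))) atTop (nhds 0) := by
    intro m
    have hnn : ∀ n, 0 ≤ ∏ k ∈ Ico m n, (1 - γ k) := fun n =>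
      Finset.prod_nonneg fun k _ => by linarith [hγ1 k]
    have hub : ∀ n, ∏ k ∈ Ico m n, (1 - γ k) ≤ Real.exp (-(∑ k ∈ Ico m n, γ k)) := by
      intro n
      calc ∏ k ∈ Ico m n, (1 - γ k) ≤ ∏ k ∈ Ico m n, Real.exp (-γ k) :=
            Finset.prod_le_prod (fun k _ => by linarith [hγ1 k])
              (fun k _ => by have := Real.add_one_le_exp (-γ k); linarith)
        _ = Real.exp (∑ k ∈ Ico m n, -γ k) := (Real.exp_sum _ _).symm
        _ = Real.exp (-(∑ k ∈ Ico m n, γ k)) := by rw [Finset.sum_neg_distrib]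
    have hsum : Tendsto (fun n => ∑ k ∈ Ico m n, γ k) atTop atTop := by
      have heq : ∀ᶠ n in atTop, (∑ k ∈ range n, γ k) - ∑ k ∈ range m, γ k
          = ∑ k ∈ Ico m n, γ k := by
        filter_upwards [eventually_ge_atTop m] with n hn
        rw [Finset.sum_Ico_eq_sub _ hn]
      exact Tendsto.congr' heq (tendsto_atTop_add_const_right _ _ hdiv)
    have hexp : Tendsto (fun n => Real.exp (-(∑ k ∈ Ico m n, γ k))) atTop (nhds 0) :=
      Real.tendsto_exp_atBot.comp (tendsto_neg_atBot_iff.mpr hsum)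
    exact squeeze_zero hnn hub hexp
  rw [Metric.tendsto_atTop]
  intro ε hε
  have htail : Tendsto (fun m => ∑' k, c (k + m)) atTop (nhds 0) := tendsto_sum_nat_add c
  obtain ⟨m, hm⟩ := (htail.eventually (gt_mem_nhds (by linarith : (0:ℝ) < ε / 2))).exists
  have hsum_le : ∀ n, ∑ k ∈ Ico m n, c k ≤ ∑' k, c (k + m) := by
    intro n
    rw [Finset.sum_Ico_eq_sum_range]
    have hs : Summable (fun k => c (k + m)) := (summable_nat_add_iff m).mpr hcs
    calc ∑ k ∈ range (n - m), c (m + k) = ∑ k ∈ range (n - m), c (k + m) := by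
          simp [add_comm]
      _ ≤ ∑' k, c (k + m) := Summable.sum_le_tsum _ (fun i _ => hc0 _) hs
  have hPm : Tendsto (fun n => (∏ k ∈ Ico m n, (1 - γ k)) * a m) atTop (nhds 0) := by
    simpa using (hprod m).mul_const (a m)
  obtain ⟨N, hN⟩ :=
    (hPm.eventually (gt_mem_nhds (by linarith : (0:ℝ) < ε / 2))).exists_forall_of_atTop
  refine ⟨max m N, fun n hn => ?_⟩
  have hnm : m ≤ n := le_trans (le_max_left _ _) hn
  have hnN : N ≤ n := le_trans (le_max_right _ _) hn
  have h1 := key m n hnm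
  have h2 := hN n hnN
  have h3 := lt_of_le_of_lt (hsum_le n) hm
  rw [Real.dist_eq, sub_zero, abs_of_nonneg (ha n)]
  linarith

/-- residual convergence, `‖x_n - T_n x_n‖ → 0`. -/
theorem stmt_3 {H : Type*} [NormedAddCommGroup H] [InnerProductSpace ℝ H] [CompleteSpace H]
    (T : ℕ → H → H) (hT : ∀ n x y, ‖T n x - T n y‖ ≤ ‖x - y‖)
    (hfix : ∃ p : H, ∀ n, T n p = p)
    (β lam : ℕ → ℝ) (u : ℕ → H)
    (hrec : ∀ n, u (n + 1) = β n • u n + lam n • (T n (β n • u n) - β n • u n))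
    (hβ : ∀ n, 0 < β n ∧ β n ≤ 1)
    (hβlim : Filter.Tendsto β Filter.atTop (nhds 1))
    (hβdiv : ¬ Summable (fun n => 1 - β n))
    (hβsum : Summable (fun n => |β (n + 1) - β n|))
    (hlam : ∀ n, 0 < lam n ∧ lam n ≤ 1)
    (hlaminf : ∃ c : ℝ, 0 < c ∧ ∀ᶠ n in Filter.atTop, c ≤ lam n)
    (hlamsum : Summable (fun n => |lam (n + 1) - lam n|))
    (hTsum : Summable (fun n => ‖T (n + 1) (β n • u n) - T n (β n • u n)‖)) :
    Filter.Tendsto (fun n => ‖u n - T n (u n)‖) Filter.atTop (nhds 0) := by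
  obtain ⟨p, hp⟩ := hfix
  set R := max ‖u 0 - p‖ ‖p‖ with hRdef
  have hpR : ‖p‖ ≤ R := le_max_right _ _
  have hR0 : 0 ≤ R := le_trans (norm_nonneg p) hpR
  have hyb : ∀ n, ‖u n - p‖ ≤ R → ‖β n • u n - p‖ ≤ R := by
    intro n h
    have hid : β n • u n - p = β n • (u n - p) + (β n - 1) • p := by module
    have hβn := hβ n
    calc ‖β n • u n - p‖ ≤ ‖β n • (u n - p)‖ + ‖(β n - 1) • p‖ := by
          rw [hid]; exact norm_add_le _ _
      _ = |β n| * ‖u n - p‖ + |β n - 1| * ‖p‖ := by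
          rw [norm_smul, norm_smul, Real.norm_eq_abs, Real.norm_eq_abs]
      _ = β n * ‖u n - p‖ + (1 - β n) * ‖p‖ := by
          rw [abs_of_pos hβn.1, abs_of_nonpos (by linarith [hβn.2])]; ring_nf
      _ ≤ β n * R + (1 - β n) * R := by
          have h1 : (0:ℝ) ≤ β n := le_of_lt hβn.1
          have h2 : (0:ℝ) ≤ 1 - β n := by linarith [hβn.2]
          gcongr
      _ = R := by ring
  have hub : ∀ n, ‖u n - p‖ ≤ R := by
    intro n
    induction n with
    | zero => exact le_max_left _ _
    | succ n ih =>
      have hy1 : ‖β n • u n - p‖ ≤ R := hyb n ih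
      have hln := hlam n
      have hid : u (n + 1) - p
          = (1 - lam n) • (β n • u n - p) + lam n • (T n (β n • u n) - T n p) := by
        rw [hrec n, hp n]; module
      calc ‖u (n + 1) - p‖
          ≤ ‖(1 - lam n) • (β n • u n - p)‖ + ‖lam n • (T n (β n • u n) - T n p)‖ := by
            rw [hid]; exact norm_add_le _ _
        _ = |1 - lam n| * ‖β n • u n - p‖ + |lam n| * ‖T n (β n • u n) - T n p‖ := by
            rw [norm_smul, norm_smul, Real.norm_eq_abs, Real.norm_eq_abs]
        _ ≤ (1 - lam n) * R + lam n * R := by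
            rw [abs_of_nonneg (by linarith [hln.2]), abs_of_pos hln.1]
            have h1 : (0:ℝ) ≤ 1 - lam n := by linarith [hln.2]
            have h2 := le_trans (hT n (β n • u n) p) hy1
            gcongr
            exact le_of_lt hln.1
        _ = R := by ring
  have hyp : ∀ n, ‖β n • u n - p‖ ≤ R := fun n => hyb n (hub n)
  set M := R + ‖p‖ with hMdef
  have huM : ∀ n, ‖u n‖ ≤ M := by
    intro n
    calc ‖u n‖ = ‖(u n - p) + p‖ := by rw [sub_add_cancel]
      _ ≤ ‖u n - p‖ + ‖p‖ := norm_add_le _ _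
      _ ≤ M := by have := hub n; rw [hMdef]; linarith
  have hM0 : 0 ≤ M := le_trans (norm_nonneg (u 0)) (huM 0)
  have hTyb : ∀ n, ‖T n (β n • u n) - β n • u n‖ ≤ 2 * R := by
    intro n
    calc ‖T n (β n • u n) - β n • u n‖
        ≤ ‖T n (β n • u n) - T n p‖ + ‖p - β n • u n‖ := by
          have h : T n (β n • u n) - β n • u n
              = (T n (β n • u n) - T n p) + (p - β n • u n) := by rw [hp n]; abel
          rw [h]; exact norm_add_le _ _
      _ ≤ ‖β n • u n - p‖ + ‖β n • u n - p‖ := by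
          rw [norm_sub_rev p (β n • u n)]
          gcongr
          exact hT n _ _
      _ ≤ 2 * R := by linarith [hyp n]
  -- Step 2: `‖u (n+1) - u n‖ → 0` via Xu's lemma.
  set a : ℕ → ℝ := fun n => ‖u (n + 1) - u n‖ with hadef
  set c : ℕ → ℝ := fun n => M * |β (n + 1) - β n| + (2 * R * |lam (n + 1) - lam n|
      + ‖T (n + 1) (β n • u n) - T n (β n • u n)‖) with hcdef
  have halim : Tendsto a atTop (nhds 0) := by
    apply xu_lemma a (fun n => 1 - β (n + 1)) c (fun n => norm_nonneg _)
      (fun n => by show (0:ℝ) ≤ 1 - β (n + 1); linarith [(hβ (n + 1)).2])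
      (fun n => by show 1 - β (n + 1) ≤ 1; linarith [(hβ (n + 1)).1])
    · rw [← not_summable_iff_tendsto_nat_atTop_of_nonneg
        (fun n => by linarith [(hβ (n + 1)).2])]
      intro hsummable
      exact hβdiv ((summable_nat_add_iff 1).mp hsummable)
    · intro n
      have h1 : (0:ℝ) ≤ M * |β (n + 1) - β n| := mul_nonneg hM0 (abs_nonneg _)
      have h2 : (0:ℝ) ≤ 2 * R * |lam (n + 1) - lam n| := by positivity
      have h3 : (0:ℝ) ≤ ‖T (n + 1) (β n • u n) - T n (β n • u n)‖ := norm_nonneg _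
      simp only [hcdef]; linarith
    · exact (hβsum.mul_left M).add ((hlamsum.mul_left (2 * R)).add hTsum)
    · intro n
      have hid : u (n + 2) - u (n + 1) =
          (1 - lam (n + 1)) • (β (n + 1) • u (n + 1) - β n • u n)
          + lam (n + 1) • (T (n + 1) (β (n + 1) • u (n + 1)) - T n (β n • u n))
          + (lam (n + 1) - lam n) • (T n (β n • u n) - β n • u n) := by
        rw [hrec (n + 1), hrec n]; module
      have hΔy : ‖β (n + 1) • u (n + 1) - β n • u n‖
          ≤ β (n + 1) * a n + |β (n + 1) - β n| * M := by
        have hid2 : β (n + 1) • u (n + 1) - β n • u n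
            = β (n + 1) • (u (n + 1) - u n) + (β (n + 1) - β n) • u n := by module
        calc ‖β (n + 1) • u (n + 1) - β n • u n‖
            ≤ ‖β (n + 1) • (u (n + 1) - u n)‖ + ‖(β (n + 1) - β n) • u n‖ := by
              rw [hid2]; exact norm_add_le _ _
          _ = |β (n + 1)| * ‖u (n + 1) - u n‖ + |β (n + 1) - β n| * ‖u n‖ := by
              rw [norm_smul, norm_smul, Real.norm_eq_abs, Real.norm_eq_abs]
          _ ≤ β (n + 1) * a n + |β (n + 1) - β n| * M := by
              rw [abs_of_pos (hβ (n + 1)).1]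
              gcongr <;> first | exact huM n | exact abs_nonneg _ | exact le_refl _
      have hΔT : ‖T (n + 1) (β (n + 1) • u (n + 1)) - T n (β n • u n)‖
          ≤ ‖β (n + 1) • u (n + 1) - β n • u n‖
            + ‖T (n + 1) (β n • u n) - T n (β n • u n)‖ := by
        calc ‖T (n + 1) (β (n + 1) • u (n + 1)) - T n (β n • u n)‖
            ≤ ‖T (n + 1) (β (n + 1) • u (n + 1)) - T (n + 1) (β n • u n)‖
              + ‖T (n + 1) (β n • u n) - T n (β n • u n)‖ := by
              have h : T (n + 1) (β (n + 1) • u (n + 1)) - T n (β n • u n)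
                  = (T (n + 1) (β (n + 1) • u (n + 1)) - T (n + 1) (β n • u n))
                  + (T (n + 1) (β n • u n) - T n (β n • u n)) := by abel
              rw [h]; exact norm_add_le _ _
          _ ≤ _ := by gcongr; exact hT (n + 1) _ _
      have hln := hlam (n + 1)
      have h1 : (0:ℝ) ≤ 1 - lam (n + 1) := by linarith [hln.2]
      have hest : a (n + 1) ≤ (1 - lam (n + 1)) * ‖β (n + 1) • u (n + 1) - β n • u n‖
          + lam (n + 1) * ‖T (n + 1) (β (n + 1) • u (n + 1)) - T n (β n • u n)‖
          + |lam (n + 1) - lam n| * (2 * R) := by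
        have h : a (n + 1) = ‖u (n + 2) - u (n + 1)‖ := rfl
        rw [h, hid]
        calc ‖(1 - lam (n + 1)) • (β (n + 1) • u (n + 1) - β n • u n)
              + lam (n + 1) • (T (n + 1) (β (n + 1) • u (n + 1)) - T n (β n • u n))
              + (lam (n + 1) - lam n) • (T n (β n • u n) - β n • u n)‖
            ≤ ‖(1 - lam (n + 1)) • (β (n + 1) • u (n + 1) - β n • u n)‖
              + ‖lam (n + 1) • (T (n + 1) (β (n + 1) • u (n + 1)) - T n (β n • u n))‖
              + ‖(lam (n + 1) - lam n) • (T n (β n • u n) - β n • u n)‖ := norm_add₃_le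
          _ ≤ (1 - lam (n + 1)) * ‖β (n + 1) • u (n + 1) - β n • u n‖
              + lam (n + 1) * ‖T (n + 1) (β (n + 1) • u (n + 1)) - T n (β n • u n)‖
              + |lam (n + 1) - lam n| * (2 * R) := by
              rw [norm_smul, norm_smul, norm_smul, Real.norm_eq_abs, Real.norm_eq_abs,
                Real.norm_eq_abs, abs_of_nonneg h1, abs_of_pos hln.1]
              gcongr <;> first | exact hTyb n | exact abs_nonneg _ | exact le_refl _
      have hDy0 : (0:ℝ) ≤ ‖β (n + 1) • u (n + 1) - β n • u n‖ := norm_nonneg _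
      have hs0 : (0:ℝ) ≤ ‖T (n + 1) (β n • u n) - T n (β n • u n)‖ := norm_nonneg _
      have h4 := mul_le_mul_of_nonneg_left hΔT (le_of_lt hln.1)
      simp only [hcdef]
      nlinarith [hest, hΔy, h4, hDy0, hs0, hln.1, hln.2, abs_nonneg (β (n + 1) - β n)]
  -- Step 3: residual estimate and squeeze.
  obtain ⟨cl, hcl0, hclev⟩ := hlaminf
  have hkey3 : ∀ n, lam n * ‖u n - T n (u n)‖ ≤ a n + (1 - β n) * M := by
    intro n
    have hβn := hβ n
    have hd : ‖β n • u n - u n‖ ≤ (1 - β n) * M := by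
      have h : β n • u n - u n = (β n - 1) • u n := by module
      rw [h, norm_smul, Real.norm_eq_abs, abs_of_nonpos (by linarith [hβn.2])]
      have h2 : (0:ℝ) ≤ 1 - β n := by linarith [hβn.2]
      calc -(β n - 1) * ‖u n‖ = (1 - β n) * ‖u n‖ := by ring
        _ ≤ (1 - β n) * M := by gcongr; exact huM n
    have hln := hlam n
    have h1 : (0:ℝ) ≤ 1 - lam n := by linarith [hln.2]
    have hid3 : u (n + 1) - T n (u n)
        = (1 - lam n) • (β n • u n - T n (u n)) + lam n • (T n (β n • u n) - T n (u n)) := by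
      rw [hrec n]; module
    have e1 : ‖u (n + 1) - T n (u n)‖
        ≤ (1 - lam n) * ‖β n • u n - T n (u n)‖ + lam n * ‖β n • u n - u n‖ := by
      rw [hid3]
      calc ‖(1 - lam n) • (β n • u n - T n (u n)) + lam n • (T n (β n • u n) - T n (u n))‖
          ≤ ‖(1 - lam n) • (β n • u n - T n (u n))‖
            + ‖lam n • (T n (β n • u n) - T n (u n))‖ := norm_add_le _ _
        _ ≤ _ := by
            rw [norm_smul, norm_smul, Real.norm_eq_abs, Real.norm_eq_abs,
              abs_of_nonneg h1, abs_of_pos hln.1]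
            gcongr
            · exact le_of_lt hln.1
            · exact hT n _ _
    have e2 : ‖β n • u n - T n (u n)‖ ≤ ‖β n • u n - u n‖ + ‖u n - T n (u n)‖ := by
      have h : β n • u n - T n (u n) = (β n • u n - u n) + (u n - T n (u n)) := by abel
      rw [h]; exact norm_add_le _ _
    have e0 : ‖u n - T n (u n)‖ ≤ a n + ‖u (n + 1) - T n (u n)‖ := by
      have h : u n - T n (u n) = (u n - u (n + 1)) + (u (n + 1) - T n (u n)) := by abel
      calc ‖u n - T n (u n)‖ ≤ ‖u n - u (n + 1)‖ + ‖u (n + 1) - T n (u n)‖ := by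
            rw [h]; exact norm_add_le _ _
        _ = a n + ‖u (n + 1) - T n (u n)‖ := by rw [norm_sub_rev]
    have h5 := mul_le_mul_of_nonneg_left e2 h1
    nlinarith [e0, e1, hd, hln.1, hln.2, norm_nonneg (β n • u n - u n),
      norm_nonneg (u n - T n (u n))]
  have h1mβ : Tendsto (fun n => (1 - β n) * M) atTop (nhds 0) := by
    have h0 : Tendsto (fun n => 1 - β n) atTop (nhds 0) := by
      have := hβlim.const_sub 1
      simpa using this
    simpa using h0.mul_const M
  have hg : Tendsto (fun n => (a n + (1 - β n) * M) / cl) atTop (nhds 0) := by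
    have := (halim.add h1mβ).div_const cl
    simpa using this
  apply squeeze_zero' (Eventually.of_forall fun n => norm_nonneg _) ?_ hg
  filter_upwards [hclev] with n hn
  have hk := hkey3 n
  have hr0 : 0 ≤ ‖u n - T n (u n)‖ := norm_nonneg _
  rw [le_div_iff₀ hcl0]
  nlinarith [mul_le_mul_of_nonneg_right hn hr0]
end

section
/- Let H be a real Hilbert space, (T_n)_{n≥0} a sequence of nonexpansive operators T_n : H → H, and x̄ a common fixed point of all T_n. Let (x_n)_{n≥0} be generated by x_{n+1} = β_n x_n + λ_n (T_n(β_n x_n) − β_n x_n) for all n ≥ 0 from a starting point x_0 ∈ H, where 0 < β_n ≤ 1 and 0 < λ_n ≤ 1 for all n ≥ 0. Then for every n ≥ 0, ‖x_{n+1} − x̄‖² ≤ β_n ‖x_n − x̄‖² + (1 − β_n)(2 β_n ⟨−x̄, x_n − x̄⟩ + (1 − β_n) ‖x̄‖²). -/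
open scoped RealInnerProductSpace

/-- the key one-step estimate towards the minimum-norm common fixed point. -/
theorem stmt_4 {H : Type*} [NormedAddCommGroup H] [InnerProductSpace ℝ H] [CompleteSpace H]
    (T : ℕ → H → H) (hT : ∀ n x y, ‖T n x - T n y‖ ≤ ‖x - y‖)
    (xb : H) (hxb : ∀ n, T n xb = xb)
    (β lam : ℕ → ℝ)
    (hβ : ∀ n, 0 < β n ∧ β n ≤ 1) (hlam : ∀ n, 0 < lam n ∧ lam n ≤ 1)
    (u : ℕ → H)
    (hrec : ∀ n, u (n + 1) = β n • u n + lam n • (T n (β n • u n) - β n • u n)) :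
    ∀ n, ‖u (n + 1) - xb‖ ^ 2 ≤
      β n * ‖u n - xb‖ ^ 2 +
        (1 - β n) * (2 * β n * ⟪-xb, u n - xb⟫ + (1 - β n) * ‖xb‖ ^ 2) := by
  intro n
  obtain ⟨hβ0, hβ1⟩ := hβ n
  obtain ⟨hl0, hl1⟩ := hlam n
  set y := β n • u n with hy
  have h1 : ‖u (n + 1) - xb‖ ≤ ‖y - xb‖ := by
    have e : u (n + 1) - xb = (1 - lam n) • (y - xb) + lam n • (T n y - xb) := by
      rw [hrec n, ← hy]; module
    rw [e]
    have hTy : ‖T n y - xb‖ ≤ ‖y - xb‖ := by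
      have := hT n y xb; rwa [hxb n] at this
    calc ‖(1 - lam n) • (y - xb) + lam n • (T n y - xb)‖
        ≤ ‖(1 - lam n) • (y - xb)‖ + ‖lam n • (T n y - xb)‖ := norm_add_le _ _
      _ = (1 - lam n) * ‖y - xb‖ + lam n * ‖T n y - xb‖ := by
          rw [norm_smul, norm_smul, Real.norm_of_nonneg (by linarith),
            Real.norm_of_nonneg hl0.le]
      _ ≤ (1 - lam n) * ‖y - xb‖ + lam n * ‖y - xb‖ := by nlinarith
      _ = ‖y - xb‖ := by ring
  have h2 : ‖u (n + 1) - xb‖ ^ 2 ≤ ‖y - xb‖ ^ 2 :=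
    pow_le_pow_left₀ (norm_nonneg _) h1 2
  have e2 : y - xb = β n • (u n - xb) + (β n - 1) • xb := by rw [hy]; module
  have h3 : ‖y - xb‖ ^ 2 = (β n) ^ 2 * ‖u n - xb‖ ^ 2
      + 2 * (β n * (β n - 1)) * ⟪u n - xb, xb⟫ + (β n - 1) ^ 2 * ‖xb‖ ^ 2 := by
    rw [e2, norm_add_sq_real, real_inner_smul_left, real_inner_smul_right,
      norm_smul, norm_smul, Real.norm_of_nonneg hβ0.le, Real.norm_eq_abs,
      abs_of_nonpos (show β n - 1 ≤ 0 by linarith)]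
    ring
  have h4 : ⟪-xb, u n - xb⟫ = -⟪u n - xb, xb⟫ := by
    rw [inner_neg_left, real_inner_comm]
  have hn : (0:ℝ) ≤ ‖u n - xb‖ ^ 2 := by positivity
  nlinarith [mul_nonneg (mul_nonneg hβ0.le (sub_nonneg.2 hβ1)) hn]
end

section
/- Let H be a real Hilbert space, (T_n)_{n≥0} a sequence of nonexpansive operators T_n : H → H, and S := ∩_{n≥0} Fix T_n ≠ ∅. Let (x_n)_{n≥0} be a bounded sequence in H with ‖x_n − T_n x_n‖ → 0 as n → +∞, and suppose the following asymptotic condition holds: for any subsequence (x_{n_k})_{k≥0} of (x_n)_{n≥0} converging weakly to some x ∈ H (i.e., ⟨x_{n_k}, z⟩ → ⟨x, z⟩ for all z ∈ H) with x_{n_k} − T_{n_k} x_{n_k} → 0 strongly, one has x ∈ S. Let x̄ ∈ S be the element of S with minimum norm, i.e., x̄ ∈ S and ‖x̄‖ ≤ ‖y‖ for all y ∈ S. Then limsup_{n→+∞} ⟨−x̄, x_n − x̄⟩ ≤ 0. -/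
open scoped RealInnerProductSpace
open Filter Topology Function InnerProductSpace

/-!
A bounded sequence has weakly convergent subsequences (sequential Banach–Alaoglu on the separable
closed span of the sequence, read through the Riesz representation). Along a subsequence realizing
the limsup, extract such a weakly convergent one; since its residuals tend to zero, the asymptotic
condition puts its weak limit `x` in `S`. The fixed point sets of nonexpansive maps are convex
(by strict convexity of `H`), so `S` is convex, and the minimal-norm point `x̄` of a convex set
satisfies the variational inequality `⟪-x̄, x - x̄⟫ ≤ 0`, which is the limit along the subsequence.
-/

theorem LipschitzWith.convex_fixedPoints {E : Type*} [NormedAddCommGroup E] [NormedSpace ℝ E]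
    [StrictConvexSpace ℝ E] {T : E → E} (hT : LipschitzWith 1 T) :
    Convex ℝ (fixedPoints T) := by
  intro x hx y hy a b ha hb hab
  obtain rfl : a = 1 - b := eq_sub_of_add_eq hab
  rw [← AffineMap.lineMap_apply_module]
  set z := AffineMap.lineMap x y b
  have hxz : dist x (T z) ≤ b * dist x y := calc
    dist x (T z) = dist (T x) (T z) := by rw [hx.eq]
    _ ≤ dist x z := by simpa using hT.dist_le_mul x z
    _ = b * dist x y := by rw [dist_left_lineMap, Real.norm_of_nonneg hb]
  have hzy : dist (T z) y ≤ (1 - b) * dist x y := calc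
    dist (T z) y = dist (T z) (T y) := by rw [hy.eq]
    _ ≤ dist z y := by simpa using hT.dist_le_mul z y
    _ = (1 - b) * dist x y := by rw [dist_lineMap_right, Real.norm_of_nonneg ha]
  -- by the triangle inequality through `T z`, both bounds are equalities
  have htri := dist_triangle x (T z) y
  exact eq_lineMap_of_dist_eq_mul_of_dist_eq_mul (by linarith) (by linarith)

theorem inner_neg_sub_nonpos_of_forall_norm_le {F : Type*} [NormedAddCommGroup F]
    [InnerProductSpace ℝ F] {K : Set F} (hK : Convex ℝ K) {v : F} (hv : v ∈ K)
    (hmin : ∀ w ∈ K, ‖v‖ ≤ ‖w‖) {w : F} (hw : w ∈ K) : ⟪-v, w - v⟫ ≤ 0 := by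
  have : Nonempty K := ⟨⟨v, hv⟩⟩
  have hinf : ‖(0 : F) - v‖ = ⨅ w : K, ‖(0 : F) - w‖ :=
    le_antisymm (le_ciInf fun w => by simpa using hmin w w.2)
      (ciInf_le ⟨0, Set.forall_mem_range.2 fun _ => norm_nonneg _⟩ (⟨v, hv⟩ : K))
  simpa using (norm_eq_iInf_iff_real_inner_le_zero hK hv).1 hinf w hw

theorem Filter.limsup_le_of_forall_exists_subseq_tendsto {f : ℕ → ℝ} {c : ℝ}
    (hf : IsBoundedUnder (· ≥ ·) atTop f)
    (h : ∀ φ : ℕ → ℕ, StrictMono φ →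
      ∃ ψ : ℕ → ℕ, StrictMono ψ ∧ ∃ l ≤ c, Tendsto (fun k => f (φ (ψ k))) atTop (𝓝 l)) :
    limsup f atTop ≤ c := by
  by_contra! hlt
  obtain ⟨c', hcc', hc'⟩ := exists_between hlt
  obtain ⟨φ, hφ, hfφ⟩ :=
    extraction_of_frequently_atTop (frequently_lt_of_lt_limsup hf.isCoboundedUnder_le hc')
  obtain ⟨ψ, -, l, hlc, hl⟩ := h φ hφ
  have : c' ≤ l := ge_of_tendsto' hl fun k => (hfφ (ψ k)).le
  linarith

section WeakCompactness

variable {H : Type*} [NormedAddCommGroup H] [InnerProductSpace ℝ H] [CompleteSpace H]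

theorem exists_subseq_tendsto_inner_of_separableSpace [TopologicalSpace.SeparableSpace H]
    {u : ℕ → H} {M : ℝ} (hu : ∀ n, ‖u n‖ ≤ M) :
    ∃ φ : ℕ → ℕ, StrictMono φ ∧ ∃ x : H,
      ∀ z : H, Tendsto (fun k => ⟪u (φ k), z⟫) atTop (𝓝 ⟪x, z⟫) := by
  let v : ℕ → WeakDual ℝ H := fun n => StrongDual.toWeakDual (toDual ℝ H (u n))
  have hv : ∀ n, v n ∈ WeakDual.toStrongDual ⁻¹' Metric.closedBall 0 M := by
    simpa [v] using hu
  obtain ⟨a, -, φ, hφ, hlim⟩ := WeakDual.isSeqCompact_closedBall ℝ H 0 M hv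
  refine ⟨φ, hφ, (toDual ℝ H).symm (WeakDual.toStrongDual a), fun z => ?_⟩
  simpa [v, comp_def] using ((WeakDual.eval_continuous z).tendsto a).comp hlim

theorem exists_subseq_tendsto_inner {u : ℕ → H} {M : ℝ} (hu : ∀ n, ‖u n‖ ≤ M) :
    ∃ φ : ℕ → ℕ, StrictMono φ ∧ ∃ x : H,
      ∀ z : H, Tendsto (fun k => ⟪u (φ k), z⟫) atTop (𝓝 ⟪x, z⟫) := by
  set K := (Submodule.span ℝ (Set.range u)).topologicalClosure
  have huK (n : ℕ) : u n ∈ K :=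
    Submodule.le_topologicalClosure _ (Submodule.subset_span (Set.mem_range_self n))
  have : TopologicalSpace.SeparableSpace K :=
    ((Set.countable_range u).isSeparable.span).closure.separableSpace
  obtain ⟨φ, hφ, x, hx⟩ :=
    exists_subseq_tendsto_inner_of_separableSpace (u := fun n => (⟨u n, huK n⟩ : K)) hu
  -- against `z`, the sequence only sees the orthogonal projection of `z` onto `K`
  exact ⟨φ, hφ, x, fun z => by simpa using hx (K.orthogonalProjectionOnto z)⟩

end WeakCompactness

/-- `limsup ⟨-x̄, x_n - x̄⟩ ≤ 0` under the asymptotic condition. -/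
theorem stmt_5 {H : Type*} [NormedAddCommGroup H] [InnerProductSpace ℝ H] [CompleteSpace H]
    (T : ℕ → H → H) (hT : ∀ n x y, ‖T n x - T n y‖ ≤ ‖x - y‖)
    (u : ℕ → H)
    (hbdd : ∃ M : ℝ, ∀ n, ‖u n‖ ≤ M)
    (hres : Filter.Tendsto (fun n => ‖u n - T n (u n)‖) Filter.atTop (nhds 0))
    (hasym : ∀ φ : ℕ → ℕ, StrictMono φ → ∀ x : H,
      (∀ z : H, Filter.Tendsto (fun k => ⟪u (φ k), z⟫) Filter.atTop (nhds ⟪x, z⟫)) →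
      Filter.Tendsto (fun k => u (φ k) - T (φ k) (u (φ k))) Filter.atTop (nhds 0) →
      ∀ n, T n x = x)
    (xb : H) (hxb : ∀ n, T n xb = xb)
    (hmin : ∀ y : H, (∀ n, T n y = y) → ‖xb‖ ≤ ‖y‖) :
    Filter.limsup (fun n => ⟪-xb, u n - xb⟫) Filter.atTop ≤ 0 := by
  obtain ⟨M, hM⟩ := hbdd
  set S := ⋂ n, fixedPoints (T n)
  have hS : Convex ℝ S := convex_iInter fun n =>
    LipschitzWith.convex_fixedPoints <|
      .of_dist_le_mul fun x y => by simpa [dist_eq_norm] using hT n x y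
  have hvar {x : H} (hx : x ∈ S) : ⟪-xb, x - xb⟫ ≤ 0 :=
    inner_neg_sub_nonpos_of_forall_norm_le hS (Set.mem_iInter.2 hxb)
      (fun y hy => hmin y fun n => Set.mem_iInter.1 hy n) hx
  have hres' := tendsto_zero_iff_norm_tendsto_zero.2 hres
  refine limsup_le_of_forall_exists_subseq_tendsto ?_ fun φ hφ => ?_
  · refine isBoundedUnder_of ⟨-(‖xb‖ * (M + ‖xb‖)), fun n => ?_⟩
    have hun : ‖u n - xb‖ ≤ M + ‖xb‖ := (norm_sub_le _ _).trans (by linarith [hM n])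
    calc -(‖xb‖ * (M + ‖xb‖)) ≤ -(‖-xb‖ * ‖u n - xb‖) := by rw [norm_neg]; gcongr
      _ ≤ ⟪-xb, u n - xb⟫ := neg_le_of_abs_le (abs_real_inner_le_norm _ _)
  obtain ⟨ψ, hψ, x, hx⟩ := exists_subseq_tendsto_inner fun k => hM (φ k)
  have hφψ : StrictMono (φ ∘ ψ) := hφ.comp hψ
  have hxS : x ∈ S := Set.mem_iInter.2 <| hasym _ hφψ x hx (hres'.comp hφψ.tendsto_atTop)
  refine ⟨ψ, hψ, _, hvar hxS, ?_⟩
  simpa only [inner_sub_right, real_inner_comm (-xb)] using (hx (-xb)).sub_const ⟪xb, -xb⟫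
end

section
/- Let H be a real Hilbert space and (T_n)_{n≥0} a sequence of nonexpansive operators T_n : H → H with S := ∩_{n≥0} Fix T_n ≠ ∅. Let (x_n)_{n≥0} be generated by x_{n+1} = β_n x_n + λ_n (T_n(β_n x_n) − β_n x_n) for all n ≥ 0 from a starting point x_0 ∈ H, where (i) 0 < β_n ≤ 1 for all n ≥ 0, β_n → 1, Σ_{n≥0}(1 − β_n) = +∞, and Σ_{n≥1} |β_n − β_{n−1}| < +∞; (ii) 0 < λ_n ≤ 1 for all n ≥ 0, liminf_{n→+∞} λ_n > 0, and Σ_{n≥1} |λ_n − λ_{n−1}| < +∞; (iii) Σ_{n≥1} ‖T_n(β_{n−1} x_{n−1}) − T_{n−1}(β_{n−1} x_{n−1})‖ < +∞. Suppose in addition that the family satisfies the asymptotic condition: for any subsequence (x_{n_k})_{k≥0} of (x_n)_{n≥0} converging weakly to some x ∈ H (i.e., ⟨x_{n_k}, z⟩ → ⟨x, z⟩ for all z ∈ H) with x_{n_k} − T_{n_k} x_{n_k} → 0 strongly, one has x ∈ S. If x̄ ∈ S satisfies ‖x̄‖ ≤ ‖y‖ for all y ∈ S, then (x_n)_{n≥0}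 converges strongly to x̄. -/
/-
The iterates are Fejér-like with respect to every common fixed point, up to the shrinking by
`β n`, hence bounded. The summable variations of `β`, `lam` and `T` put `‖u (n + 1) - u n‖` into
Xu's recursion `s (n + 1) ≤ (1 - γ n) s n + γ n δ n + c n` with `γ n = 1 - β (n + 1)`, so the
iteration is asymptotically regular and `u n - T n (u n) → 0`. Weak cluster points are then common
fixed points, and since the common fixed point set is convex with minimum-norm element `xb`,
`⟪xb, x - xb⟫ ≥ 0` for each of them; this gives `limsup ⟪xb, xb - β n • u n⟫ ≤ 0`. Expanding
`‖β n • u n - xb‖ ^ 2` then puts `‖u n - xb‖ ^ 2` into Xu's recursion with `γ n = 1 - β n`, whose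
sum diverges, so it tends to `0`.
-/

open scoped RealInnerProductSpace
open Filter Topology Finset TopologicalSpace

theorem tendsto_prod_one_sub_of_not_summable {γ : ℕ → ℝ} (hγ0 : ∀ n, 0 ≤ γ n)
    (hγ1 : ∀ n, γ n ≤ 1) (hγ : ¬ Summable γ) :
    Tendsto (fun k => ∏ j ∈ range k, (1 - γ j)) atTop (𝓝 0) := by
  have hexp : Tendsto (fun k => Real.exp (-∑ j ∈ range k, γ j)) atTop (𝓝 0) :=
    Real.tendsto_exp_atBot.comp <| tendsto_neg_atTop_atBot.comp <|
      (not_summable_iff_tendsto_nat_atTop_of_nonneg hγ0).1 hγ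
  refine squeeze_zero (fun k => prod_nonneg fun j _ => sub_nonneg.2 (hγ1 j)) (fun k => ?_) hexp
  rw [← sum_neg_distrib, Real.exp_sum]
  refine prod_le_prod (fun j _ => sub_nonneg.2 (hγ1 j)) fun j _ => ?_
  linarith [Real.add_one_le_exp (-γ j)]

theorem le_prod_one_sub_mul_add_sum {s γ c : ℕ → ℝ} {ε : ℝ} (hγ0 : ∀ n, 0 ≤ γ n)
    (hγ1 : ∀ n, γ n ≤ 1) (hc0 : ∀ n, 0 ≤ c n) (hε : 0 ≤ ε)
    (hrec : ∀ n, s (n + 1) ≤ (1 - γ n) * s n + γ n * ε + c n) (k : ℕ) :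
    s k ≤ (∏ j ∈ range k, (1 - γ j)) * s 0 + ε + ∑ j ∈ range k, c j := by
  induction k with
  | zero => simpa using hε
  | succ k ih =>
    have hC : 0 ≤ ∑ j ∈ range k, c j := sum_nonneg fun j _ => hc0 j
    rw [prod_range_succ, sum_range_succ]
    nlinarith [hrec k, mul_le_mul_of_nonneg_left ih (sub_nonneg.2 (hγ1 k)), hγ0 k]

/-- Xu's lemma. -/
theorem tendsto_zero_of_le_one_sub_mul_add {s γ δ c : ℕ → ℝ} (hs0 : ∀ n, 0 ≤ s n)
    (hγ0 : ∀ n, 0 ≤ γ n) (hγ1 : ∀ n, γ n ≤ 1) (hγ : ¬ Summable γ)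
    (hδ : ∀ ε > 0, ∀ᶠ n in atTop, δ n ≤ ε) (hc0 : ∀ n, 0 ≤ c n) (hc : Summable c)
    (hrec : ∀ n, s (n + 1) ≤ (1 - γ n) * s n + γ n * δ n + c n) :
    Tendsto s atTop (𝓝 0) := by
  rw [Metric.tendsto_atTop]
  intro ε hε
  obtain ⟨N₁, hN₁⟩ := (hδ (ε / 3) (by positivity)).exists_forall_of_atTop
  obtain ⟨N₂, hN₂⟩ := ((tendsto_sum_nat_add c).eventually
    (eventually_lt_nhds (show (0 : ℝ) < ε / 3 by positivity))).exists_forall_of_atTop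
  set N := max N₁ N₂
  have hbound := le_prod_one_sub_mul_add_sum (s := fun k => s (k + N)) (γ := fun k => γ (k + N))
    (c := fun k => c (k + N)) (ε := ε / 3) (fun k => hγ0 _) (fun k => hγ1 _) (fun k => hc0 _)
    (by positivity) fun k => by
      have := mul_le_mul_of_nonneg_left (hN₁ (k + N) (by omega)) (hγ0 (k + N))
      simpa only [Nat.add_right_comm k 1 N] using (hrec (k + N)).trans (by linarith)
  have hprod := ((tendsto_prod_one_sub_of_not_summable (fun k => hγ0 (k + N)) (fun k => hγ1 _)
    (mt (summable_nat_add_iff N).1 hγ)).mul_const (s N)).eventually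
    (eventually_lt_nhds (show 0 * s N < ε / 3 by simpa using hε))
  obtain ⟨K, hK⟩ := hprod.exists_forall_of_atTop
  refine ⟨K + N, fun n hn => ?_⟩
  obtain ⟨k, hk, rfl⟩ : ∃ k, K ≤ k ∧ n = k + N := ⟨n - N, by omega, by omega⟩
  have htail : ∑ j ∈ range k, c (j + N) < ε / 3 :=
    ((summable_nat_add_iff N).2 hc).sum_le_tsum _ (fun j _ => hc0 _)
      |>.trans_lt (hN₂ N le_sup_right)
  rw [Real.dist_eq, sub_zero, abs_of_nonneg (hs0 _)]
  linarith [zero_add N ▸ hbound k, hK k hk]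

theorem exists_strictMono_forall_tendsto_inner {H : Type*} [NormedAddCommGroup H]
    [InnerProductSpace ℝ H] [CompleteSpace H] {v : ℕ → H} {M : ℝ} (hv : ∀ k, ‖v k‖ ≤ M) :
    ∃ φ : ℕ → ℕ, StrictMono φ ∧ ∃ x : H,
      ∀ z : H, Tendsto (fun k => ⟪v (φ k), z⟫) atTop (𝓝 ⟪x, z⟫) := by
  set K : Submodule ℝ H := (Submodule.span ℝ (Set.range v)).topologicalClosure
  have : CompleteSpace K := (Submodule.isClosed_topologicalClosure _).completeSpace_coe
  have : SeparableSpace K :=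
    ((Set.countable_range v).isSeparable.span.closure).separableSpace
  have hvK (k : ℕ) : v k ∈ K :=
    Submodule.le_topologicalClosure _ (Submodule.subset_span (Set.mem_range_self k))
  let f (k : ℕ) : WeakDual ℝ K := StrongDual.toWeakDual (InnerProductSpace.toDual ℝ K ⟨v k, hvK k⟩)
  have hf (k : ℕ) : f k ∈ WeakDual.toStrongDual ⁻¹' Metric.closedBall 0 M :=
    mem_closedBall_zero_iff.2 (((InnerProductSpace.toDual ℝ K).norm_map _).trans_le (hv k))
  obtain ⟨g, -, φ, hφ, hlim⟩ := WeakDual.isSeqCompact_closedBall ℝ K 0 M hf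
  refine ⟨φ, hφ, (InnerProductSpace.toDual ℝ K).symm (WeakDual.toStrongDual g), fun z => ?_⟩
  have hproj (y : K) : ⟪(y : H), z⟫ = ⟪y, K.orthogonalProjectionOnto z⟫ :=
    (Submodule.inner_orthogonalProjectionOnto_eq_of_mem_left y z).symm
  rw [hproj, InnerProductSpace.toDual_symm_apply]
  exact ((WeakDual.eval_continuous _).tendsto g).comp hlim |>.congr fun k => (hproj ⟨_, hvK _⟩).symm

theorem convex_fixedPoints_of_nonexpansive {E : Type*} [NormedAddCommGroup E] [NormedSpace ℝ E]
    [StrictConvexSpace ℝ E] {T : E → E} (hT : ∀ x y, ‖T x - T y‖ ≤ ‖x - y‖) :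
    Convex ℝ (Function.fixedPoints T) := by
  intro x hx y hy a b _ hb hab
  obtain rfl : a = 1 - b := by linarith
  rw [← AffineMap.lineMap_apply_module]
  set z := AffineMap.lineMap x y b
  have hdist (v w : E) : dist (T v) (T w) ≤ dist v w := by simpa only [dist_eq_norm] using hT v w
  have hxz : dist x (T z) ≤ b * dist x y := by
    have := hdist x z
    rwa [hx.eq, dist_comm x z, dist_lineMap_left, Real.norm_of_nonneg hb] at this
  have hzy : dist (T z) y ≤ (1 - b) * dist x y := by
    have := hdist z y
    rwa [hy.eq, dist_lineMap_right, Real.norm_of_nonneg (by linarith)] at this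
  have := dist_triangle x (T z) y
  exact eq_lineMap_of_dist_eq_mul_of_dist_eq_mul (by linarith) (by linarith)

theorem Convex.real_inner_sub_nonneg_of_isMinOn_norm {F : Type*} [NormedAddCommGroup F]
    [InnerProductSpace ℝ F] {K : Set F} (hK : Convex ℝ K) {v : F} (hv : v ∈ K)
    (hmin : IsMinOn (‖·‖) K v) {w : F} (hw : w ∈ K) : 0 ≤ ⟪v, w - v⟫ := by
  have : Nonempty K := ⟨⟨v, hv⟩⟩
  have hinf : ‖0 - v‖ = ⨅ w : K, ‖0 - (w : F)‖ := by
    simp only [zero_sub, norm_neg]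
    exact le_antisymm (le_ciInf fun w => hmin w.2)
      (ciInf_le ⟨0, Set.forall_mem_range.2 fun _ => norm_nonneg _⟩ (⟨v, hv⟩ : K))
  have := (norm_eq_iInf_iff_real_inner_le_zero hK hv).1 hinf w hw
  rwa [zero_sub, inner_neg_left, neg_nonpos] at this

def kmStep {E : Type*} [AddCommGroup E] [Module ℝ E] (T : E → E) (l : ℝ) (y : E) : E :=
  y + l • (T y - y)

theorem norm_apply_sub_le_two_mul {E : Type*} [SeminormedAddCommGroup E] {T : E → E}
    (hT : ∀ x y, ‖T x - T y‖ ≤ ‖x - y‖) {p : E} (hp : T p = p) (y : E) :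
    ‖T y - y‖ ≤ 2 * ‖y - p‖ := by
  calc ‖T y - y‖ ≤ ‖T y - T p‖ + ‖T p - y‖ := norm_sub_le_norm_sub_add_norm_sub _ _ _
    _ ≤ 2 * ‖y - p‖ := by rw [hp, norm_sub_rev p y]; linarith [hp ▸ hT y p]

section NormedSpace

variable {E : Type*} [NormedAddCommGroup E] [NormedSpace ℝ E]

theorem norm_kmStep_sub_le {T : E → E} (hT : ∀ x y, ‖T x - T y‖ ≤ ‖x - y‖) {p : E}
    (hp : T p = p) {l : ℝ} (hl0 : 0 ≤ l) (hl1 : l ≤ 1) (y : E) :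
    ‖kmStep T l y - p‖ ≤ ‖y - p‖ := by
  have hid : kmStep T l y - p = (1 - l) • (y - p) + l • (T y - T p) := by
    rw [kmStep, hp]; module
  calc ‖kmStep T l y - p‖ ≤ (1 - l) * ‖y - p‖ + l * ‖T y - T p‖ := by
        rw [hid]
        refine (norm_add_le _ _).trans_eq ?_
        rw [norm_smul, norm_smul, Real.norm_of_nonneg (sub_nonneg.2 hl1), Real.norm_of_nonneg hl0]
    _ ≤ ‖y - p‖ := by nlinarith [hT y p]

theorem norm_kmStep_sub_kmStep_le {S T : E → E} (hS : ∀ x y, ‖S x - S y‖ ≤ ‖x - y‖)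
    {l l' : ℝ} (hl0 : 0 ≤ l') (hl1 : l' ≤ 1) (y y' : E) :
    ‖kmStep S l' y' - kmStep T l y‖ ≤ ‖y' - y‖ + ‖S y - T y‖ + |l' - l| * ‖T y - y‖ := by
  have hid : kmStep S l' y' - kmStep T l y = (1 - l') • (y' - y) + l' • (S y' - S y)
      + l' • (S y - T y) + (l' - l) • (T y - y) := by
    rw [kmStep, kmStep]; module
  have h1 := norm_add_le ((1 - l') • (y' - y) + l' • (S y' - S y) + l' • (S y - T y))
    ((l' - l) • (T y - y))
  have h2 := norm_add₃_le (a := (1 - l') • (y' - y)) (b := l' • (S y' - S y))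
    (c := l' • (S y - T y))
  simp only [norm_smul, Real.norm_eq_abs, abs_of_nonneg hl0, abs_of_nonneg (sub_nonneg.2 hl1)]
    at h1 h2
  rw [hid]
  nlinarith [hS y' y, norm_nonneg (S y - T y)]

theorem norm_smul_sub_le {b : ℝ} (hb0 : 0 ≤ b) (hb1 : b ≤ 1) (x p : E) :
    ‖b • x - p‖ ≤ b * ‖x - p‖ + (1 - b) * ‖p‖ := by
  have hid : b • x - p = b • (x - p) - (1 - b) • p := by module
  rw [hid]
  refine (norm_sub_le _ _).trans_eq ?_
  rw [norm_smul, norm_smul, Real.norm_of_nonneg hb0, Real.norm_of_nonneg (sub_nonneg.2 hb1)]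

theorem norm_smul_sub_smul_le {b b' : ℝ} (hb' : 0 ≤ b') (x x' : E) :
    ‖b' • x' - b • x‖ ≤ b' * ‖x' - x‖ + |b' - b| * ‖x‖ := by
  have hid : b' • x' - b • x = b' • (x' - x) + (b' - b) • x := by module
  rw [hid]
  refine (norm_add_le _ _).trans_eq ?_
  rw [norm_smul, norm_smul, Real.norm_of_nonneg hb', Real.norm_eq_abs]

theorem tendsto_sub_smul_of_norm_le {u : ℕ → E} {β : ℕ → ℝ} {M : ℝ} (hu : ∀ n, ‖u n‖ ≤ M)
    (hβ : Tendsto β atTop (𝓝 1)) : Tendsto (fun n => u n - β n • u n) atTop (𝓝 0) := by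
  have h1 : Tendsto (fun n => 1 - β n) atTop (𝓝 0) := by
    simpa using (tendsto_const_nhds (x := (1 : ℝ))).sub hβ
  refine squeeze_zero_norm (fun n => ?_) (h1.abs.mul_const M |>.trans_eq (by simp))
  rw [show u n - β n • u n = (1 - β n) • u n by rw [sub_smul, one_smul], norm_smul,
    Real.norm_eq_abs]
  exact mul_le_mul_of_nonneg_left (hu n) (abs_nonneg _)

end NormedSpace

theorem norm_smul_sub_sq_le {F : Type*} [NormedAddCommGroup F] [InnerProductSpace ℝ F] {b : ℝ}
    (hb0 : 0 ≤ b) (hb1 : b ≤ 1) (x p : F) :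
    ‖b • x - p‖ ^ 2 ≤ b * ‖x - p‖ ^ 2 + 2 * ((1 - b) * ⟪p, p - b • x⟫) := by
  set a := b • (x - p)
  set c := (1 - b) • (-p)
  have hid : b • x - p = a + c := by module
  have hcross : ⟪c, a + c⟫ = (1 - b) * ⟪p, p - b • x⟫ := by
    rw [← hid, real_inner_smul_left, ← inner_neg_neg, neg_neg, neg_sub]
  have hc : ⟪c, a + c⟫ = ⟪a, c⟫ + ‖c‖ ^ 2 := by
    rw [inner_add_right, real_inner_comm, real_inner_self_eq_norm_sq]
  have ha : ‖a‖ ^ 2 = b ^ 2 * ‖x - p‖ ^ 2 := by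
    rw [norm_smul, Real.norm_of_nonneg hb0, mul_pow]
  rw [hid, norm_add_sq_real, ha, ← hcross]
  nlinarith [sq_nonneg ‖c‖, sq_nonneg ‖x - p‖, mul_nonneg hb0 (sub_nonneg.2 hb1)]

structure IsTikhonovKM {E : Type*} [NormedAddCommGroup E] [NormedSpace ℝ E] (T : ℕ → E → E)
    (β lam : ℕ → ℝ) (u : ℕ → E) : Prop where
  nonexpansive : ∀ n x y, ‖T n x - T n y‖ ≤ ‖x - y‖
  succ_eq : ∀ n, u (n + 1) = kmStep (T n) (lam n) (β n • u n)
  β_nonneg : ∀ n, 0 ≤ β n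
  β_le_one : ∀ n, β n ≤ 1
  lam_nonneg : ∀ n, 0 ≤ lam n
  lam_le_one : ∀ n, lam n ≤ 1

namespace IsTikhonovKM

variable {E : Type*} [NormedAddCommGroup E] [NormedSpace ℝ E] {T : ℕ → E → E} {β lam : ℕ → ℝ}
  {u : ℕ → E} {p : E} {M : ℝ}

theorem norm_succ_sub_le (h : IsTikhonovKM T β lam u) (hp : ∀ n, T n p = p) (n : ℕ) :
    ‖u (n + 1) - p‖ ≤ ‖β n • u n - p‖ := by
  rw [h.succ_eq]
  exact norm_kmStep_sub_le (h.nonexpansive n) (hp n) (h.lam_nonneg n) (h.lam_le_one n) _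

theorem norm_sub_le_max (h : IsTikhonovKM T β lam u) (hp : ∀ n, T n p = p) (n : ℕ) :
    ‖u n - p‖ ≤ max ‖u 0 - p‖ ‖p‖ := by
  induction n with
  | zero => exact le_max_left _ _
  | succ n ih =>
    have hβn := norm_smul_sub_le (h.β_nonneg n) (h.β_le_one n) (u n) p
    nlinarith [h.norm_succ_sub_le hp n, le_max_right ‖u 0 - p‖ ‖p‖, h.β_nonneg n, h.β_le_one n]

theorem exists_norm_le (h : IsTikhonovKM T β lam u) (hp : ∀ n, T n p = p) :
    ∃ M, ∀ n, ‖u n‖ ≤ M :=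
  ⟨max ‖u 0 - p‖ ‖p‖ + ‖p‖, fun n => (norm_le_norm_sub_add (u n) p).trans <| by
    linarith [h.norm_sub_le_max hp n]⟩

theorem norm_smul_le (h : IsTikhonovKM T β lam u) (hM : ∀ n, ‖u n‖ ≤ M) (n : ℕ) :
    ‖β n • u n‖ ≤ M := by
  rw [norm_smul, Real.norm_of_nonneg (h.β_nonneg n)]
  nlinarith [hM n, h.β_le_one n, norm_nonneg (u n)]

theorem norm_succ_succ_sub_le (h : IsTikhonovKM T β lam u) (hp : ∀ n, T n p = p)
    (hM : ∀ n, ‖u n‖ ≤ M) (n : ℕ) :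
    ‖u (n + 2) - u (n + 1)‖ ≤ β (n + 1) * ‖u (n + 1) - u n‖ + (M * |β (n + 1) - β n|
      + ‖T (n + 1) (β n • u n) - T n (β n • u n)‖ + 2 * (M + ‖p‖) * |lam (n + 1) - lam n|) := by
  have hstep := norm_kmStep_sub_kmStep_le (h.nonexpansive (n + 1)) (T := T n) (l := lam n)
    (h.lam_nonneg (n + 1)) (h.lam_le_one (n + 1)) (β n • u n) (β (n + 1) • u (n + 1))
  have hsmul := norm_smul_sub_smul_le (b := β n) (h.β_nonneg (n + 1)) (u n) (u (n + 1))
  have hres : ‖T n (β n • u n) - β n • u n‖ ≤ 2 * (M + ‖p‖) :=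
    (norm_apply_sub_le_two_mul (h.nonexpansive n) (hp n) _).trans <| by
      linarith [norm_sub_le (β n • u n) p, h.norm_smul_le hM n]
  rw [← h.succ_eq n, ← h.succ_eq (n + 1)] at hstep
  linarith [mul_le_mul_of_nonneg_left (hM n) (abs_nonneg (β (n + 1) - β n)),
    mul_le_mul_of_nonneg_left hres (abs_nonneg (lam (n + 1) - lam n))]

theorem tendsto_norm_succ_sub (h : IsTikhonovKM T β lam u) (hp : ∀ n, T n p = p)
    (hβ : ¬ Summable (fun n => 1 - β n)) (hβsum : Summable (fun n => |β (n + 1) - β n|))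
    (hlamsum : Summable (fun n => |lam (n + 1) - lam n|))
    (hTsum : Summable (fun n => ‖T (n + 1) (β n • u n) - T n (β n • u n)‖)) :
    Tendsto (fun n => ‖u (n + 1) - u n‖) atTop (𝓝 0) := by
  obtain ⟨M, hM⟩ := h.exists_norm_le hp
  have hM0 : 0 ≤ M := (norm_nonneg _).trans (hM 0)
  set c : ℕ → ℝ := fun n => M * |β (n + 1) - β n| + ‖T (n + 1) (β n • u n) - T n (β n • u n)‖
    + 2 * (M + ‖p‖) * |lam (n + 1) - lam n|
  have hc0 (n : ℕ) : 0 ≤ c n := by positivity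
  have hc : Summable c := ((hβsum.mul_left M).add hTsum).add (hlamsum.mul_left (2 * (M + ‖p‖)))
  have hγ : ¬ Summable (fun n => 1 - β (n + 1)) :=
    mt (summable_nat_add_iff (f := fun n => 1 - β n) 1).1 hβ
  refine tendsto_zero_of_le_one_sub_mul_add (s := fun n => ‖u (n + 1) - u n‖)
    (γ := fun n => 1 - β (n + 1)) (δ := fun _ => 0) (c := c)
    (fun n => norm_nonneg _) (fun n => sub_nonneg.2 (h.β_le_one _))
    (fun n => by linarith [h.β_nonneg (n + 1)]) hγ
    (fun ε hε => Eventually.of_forall fun _ => hε.le) hc0 hc fun n => ?_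
  linarith [h.norm_succ_succ_sub_le hp hM n]

theorem tendsto_norm_sub_apply (h : IsTikhonovKM T β lam u) (hM : ∀ n, ‖u n‖ ≤ M)
    (hβ : Tendsto β atTop (𝓝 1)) (hreg : Tendsto (fun n => ‖u (n + 1) - u n‖) atTop (𝓝 0))
    {c : ℝ} (hc : 0 < c) (hlam : ∀ᶠ n in atTop, c ≤ lam n) :
    Tendsto (fun n => ‖u n - T n (u n)‖) atTop (𝓝 0) := by
  have hsmul := (tendsto_sub_smul_of_norm_le hM hβ).norm
  rw [norm_zero] at hsmul
  have hstep : Tendsto (fun n => ‖T n (β n • u n) - β n • u n‖) atTop (𝓝 0) := by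
    refine squeeze_zero' (Eventually.of_forall fun n => norm_nonneg _) ?_
      ((hreg.add hsmul).div_const c |>.trans_eq (by simp))
    filter_upwards [hlam] with n hn
    have hlamn : lam n * ‖T n (β n • u n) - β n • u n‖ = ‖u (n + 1) - β n • u n‖ := by
      rw [h.succ_eq, kmStep, add_sub_cancel_left, norm_smul, Real.norm_of_nonneg (h.lam_nonneg n)]
    rw [le_div_iff₀ hc]
    nlinarith [norm_sub_le_norm_sub_add_norm_sub (u (n + 1)) (u n) (β n • u n),
      norm_nonneg (T n (β n • u n) - β n • u n)]
  refine squeeze_zero (fun n => norm_nonneg _) (fun n => ?_)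
    ((hsmul.const_mul 2).add hstep |>.trans_eq (by simp))
  have := norm_sub_le_norm_sub_add_norm_sub (u n) (β n • u n) (T n (u n))
  have := norm_sub_le_norm_sub_add_norm_sub (β n • u n) (T n (β n • u n)) (T n (u n))
  have := h.nonexpansive n (β n • u n) (u n)
  rw [norm_sub_rev (β n • u n) (T n (β n • u n)), norm_sub_rev (β n • u n) (u n)] at *
  linarith

end IsTikhonovKM

section InnerProductSpace

variable {H : Type*} [NormedAddCommGroup H] [InnerProductSpace ℝ H]

theorem eventually_two_mul_inner_le [CompleteSpace H] {T : ℕ → H → H} {β : ℕ → ℝ} {u : ℕ → H}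
    {p : H} {M : ℝ}
    (hasym : ∀ φ : ℕ → ℕ, StrictMono φ → ∀ x : H,
      (∀ z : H, Tendsto (fun k => ⟪u (φ k), z⟫) atTop (𝓝 ⟪x, z⟫)) →
      Tendsto (fun k => u (φ k) - T (φ k) (u (φ k))) atTop (𝓝 0) → ∀ n, T n x = x)
    (hvi : ∀ x, (∀ n, T n x = x) → 0 ≤ ⟪p, x - p⟫) (hM : ∀ n, ‖u n‖ ≤ M)
    (hres : Tendsto (fun n => ‖u n - T n (u n)‖) atTop (𝓝 0)) (hβ : Tendsto β atTop (𝓝 1)) :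
    ∀ ε > 0, ∀ᶠ n in atTop, 2 * ⟪p, p - β n • u n⟫ ≤ ε := by
  intro ε hε
  by_contra hfreq
  obtain ⟨φ, hφ, hgt⟩ := extraction_of_frequently_atTop
    ((not_eventually.1 hfreq).mono fun n => lt_of_not_ge)
  obtain ⟨ψ, hψ, x, hx⟩ := exists_strictMono_forall_tendsto_inner fun k => hM (φ k)
  have hφψ : Tendsto (φ ∘ ψ) atTop atTop := (hφ.comp hψ).tendsto_atTop
  have hfix := hasym (φ ∘ ψ) (hφ.comp hψ) x hx
    (tendsto_zero_iff_norm_tendsto_zero.2 (hres.comp hφψ))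
  have hlim : Tendsto (fun k => 2 * ⟪p, p - β (φ (ψ k)) • u (φ (ψ k))⟫) atTop
      (𝓝 (2 * (⟪p, p⟫ - 1 * ⟪x, p⟫))) := by
    refine ((tendsto_const_nhds.sub ((hβ.comp hφψ).mul (hx p))).const_mul 2).congr fun k => ?_
    rw [inner_sub_right, real_inner_smul_right, real_inner_comm (u _) p]
    rfl
  have hle := ge_of_tendsto' hlim fun k => (hgt (ψ k)).le
  have := hvi x hfix
  rw [inner_sub_right, real_inner_comm] at this
  linarith

theorem IsTikhonovKM.tendsto_of_eventually_two_mul_inner_le {T : ℕ → H → H} {β lam : ℕ → ℝ}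
    {u : ℕ → H} {p : H} (h : IsTikhonovKM T β lam u) (hp : ∀ n, T n p = p)
    (hβ : ¬ Summable (fun n => 1 - β n))
    (hδ : ∀ ε > 0, ∀ᶠ n in atTop, 2 * ⟪p, p - β n • u n⟫ ≤ ε) :
    Tendsto u atTop (𝓝 p) := by
  have hsq : Tendsto (fun n => ‖u n - p‖ ^ 2) atTop (𝓝 0) := by
    refine tendsto_zero_of_le_one_sub_mul_add (γ := fun n => 1 - β n) (c := fun _ => 0)
      (fun n => sq_nonneg _) (fun n => sub_nonneg.2 (h.β_le_one n))
      (fun n => by linarith [h.β_nonneg n]) hβ hδ (fun _ => le_rfl) summable_zero fun n => ?_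
    have h1 := pow_le_pow_left₀ (norm_nonneg _) (h.norm_succ_sub_le hp n) 2
    have h2 := norm_smul_sub_sq_le (h.β_nonneg n) (h.β_le_one n) (u n) p
    linarith
  rw [tendsto_iff_norm_sub_tendsto_zero]
  simpa [Real.sqrt_sq (norm_nonneg _)] using hsq.sqrt

end InnerProductSpace

/-- strong convergence of the Tikhonov-regularized Krasnosel'skiĭ–Mann
algorithm to the minimum-norm common fixed point. -/
theorem stmt_6 {H : Type*} [NormedAddCommGroup H] [InnerProductSpace ℝ H] [CompleteSpace H]
    (T : ℕ → H → H) (hT : ∀ n x y, ‖T n x - T n y‖ ≤ ‖x - y‖)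
    (β lam : ℕ → ℝ) (u : ℕ → H)
    (hrec : ∀ n, u (n + 1) = β n • u n + lam n • (T n (β n • u n) - β n • u n))
    (hβ : ∀ n, 0 < β n ∧ β n ≤ 1)
    (hβlim : Filter.Tendsto β Filter.atTop (nhds 1))
    (hβdiv : ¬ Summable (fun n => 1 - β n))
    (hβsum : Summable (fun n => |β (n + 1) - β n|))
    (hlam : ∀ n, 0 < lam n ∧ lam n ≤ 1)
    (hlaminf : ∃ c : ℝ, 0 < c ∧ ∀ᶠ n in Filter.atTop, c ≤ lam n)
    (hlamsum : Summable (fun n => |lam (n + 1) - lam n|))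
    (hTsum : Summable (fun n => ‖T (n + 1) (β n • u n) - T n (β n • u n)‖))
    (hasym : ∀ φ : ℕ → ℕ, StrictMono φ → ∀ x : H,
      (∀ z : H, Filter.Tendsto (fun k => ⟪u (φ k), z⟫) Filter.atTop (nhds ⟪x, z⟫)) →
      Filter.Tendsto (fun k => u (φ k) - T (φ k) (u (φ k))) Filter.atTop (nhds 0) →
      ∀ n, T n x = x)
    (xb : H) (hxb : ∀ n, T n xb = xb)
    (hmin : ∀ y : H, (∀ n, T n y = y) → ‖xb‖ ≤ ‖y‖) :
    Filter.Tendsto u Filter.atTop (nhds xb) := by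
  obtain ⟨c, hc, hlamc⟩ := hlaminf
  have hu : IsTikhonovKM T β lam u :=
    ⟨hT, hrec, fun n => (hβ n).1.le, fun n => (hβ n).2, fun n => (hlam n).1.le, fun n => (hlam n).2⟩
  have hS : Convex ℝ (⋂ n, Function.fixedPoints (T n)) :=
    convex_iInter fun n => convex_fixedPoints_of_nonexpansive (hT n)
  have hvi (x : H) (hx : ∀ n, T n x = x) : 0 ≤ ⟪xb, x - xb⟫ :=
    hS.real_inner_sub_nonneg_of_isMinOn_norm (Set.mem_iInter.2 hxb)
      (fun y hy => hmin y fun n => Set.mem_iInter.1 hy n) (Set.mem_iInter.2 hx)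
  obtain ⟨M, hM⟩ := hu.exists_norm_le hxb
  have hreg := hu.tendsto_norm_succ_sub hxb hβdiv hβsum hlamsum hTsum
  have hres := hu.tendsto_norm_sub_apply hM hβlim hreg hc hlamc
  exact hu.tendsto_of_eventually_two_mul_inner_le hxb hβdiv
    (eventually_two_mul_inner_le hasym hvi hM hres hβlim)
end

section
/- Let H be a real Hilbert space. For n ≥ 0 let α_n ∈ (0,1) and let R_n : H → H be α_n-averaged, i.e., R_n = (1 − α_n) Id + α_n T_n for some nonexpansive T_n : H → H, and suppose ∩_{n≥0} Fix R_n ≠ ∅, liminf_{n→+∞} α_n > 0 and Σ_{n≥1} |1/α_n − 1/α_{n−1}| < +∞. Let (x_n)_{n≥0} be generated by x_{n+1} = β_n x_n + λ_n (R_n(β_n x_n) − β_n x_n) for all n ≥ 0 from a starting point x_0 ∈ H, where (i) 0 < β_n ≤ 1 for all n ≥ 0, β_n → 1, Σ_{n≥0}(1 − β_n) = +∞, and Σ_{n≥1} |β_n − β_{n−1}| < +∞; (ii) 0 < λ_n ≤ 1/α_n for all n ≥ 0, liminf_{n→+∞} λ_n > 0, and Σ_{n≥1} |λ_n − λ_{n−1}|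 < +∞; (iii) Σ_{n≥1} ‖R_n(β_{n−1} x_{n−1}) − R_{n−1}(β_{n−1} x_{n−1})‖ < +∞. Then ‖x_n − R_n x_n‖ → 0 as n → +∞. -/
open Filter Finset


lemma xu_lemma_s7 (a b c : ℕ → ℝ) (ha : ∀ n, 0 ≤ a n)
    (hb0 : ∀ n, 0 ≤ b n) (hb1 : ∀ n, b n ≤ 1)
    (hbdiv : ¬ Summable (fun n => 1 - b n))
    (hc0 : ∀ n, 0 ≤ c n) (hcsum : Summable c)
    (hrec : ∀ n, a (n + 1) ≤ b n * a n + c n) :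
    Tendsto a atTop (nhds 0) := by
  have hPnn : ∀ m n, (0:ℝ) ≤ ∏ k ∈ Ico m n, b k := fun m n => Finset.prod_nonneg (fun k _ => hb0 k)
  have hcs : ∀ m n, (0:ℝ) ≤ ∑ k ∈ Ico m n, c k := fun m n => Finset.sum_nonneg (fun k _ => hc0 k)
  have key : ∀ m n, m ≤ n → a n ≤ (∏ k ∈ Ico m n, b k) * a m + ∑ k ∈ Ico m n, c k := by
    intro m n hmn
    induction n with
    | zero =>
      have : m = 0 := Nat.le_zero.mp hmn
      subst this; simp
    | succ n ih =>
      rcases Nat.lt_or_ge m (n + 1) with h | h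
      · have hmn' : m ≤ n := Nat.lt_succ_iff.mp h
        have H1 := ih hmn'
        have hP := hPnn m n
        have hS := hcs m n
        have hbn0 := hb0 n
        have hbn1 := hb1 n
        have ham := ha m
        calc a (n + 1) ≤ b n * a n + c n := hrec n
          _ ≤ b n * ((∏ k ∈ Ico m n, b k) * a m + ∑ k ∈ Ico m n, c k) + c n := by nlinarith
          _ ≤ (∏ k ∈ Ico m (n + 1), b k) * a m + ∑ k ∈ Ico m (n + 1), c k := by
              rw [Finset.prod_Ico_succ_top hmn', Finset.sum_Ico_succ_top hmn']
              nlinarith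
      · have : m = n + 1 := le_antisymm hmn h
        subst this; simp
  -- product bound via exp
  have hprod : ∀ m n, (∏ k ∈ Ico m n, b k) ≤ Real.exp (-(∑ k ∈ Ico m n, (1 - b k))) := by
    intro m n
    have : ∀ k ∈ Ico m n, b k ≤ Real.exp (-(1 - b k)) := by
      intro k _
      have := Real.add_one_le_exp (b k - 1)
      calc b k = (b k - 1) + 1 := by ring
        _ ≤ Real.exp (b k - 1) := this
        _ = Real.exp (-(1 - b k)) := by ring_nf
    calc (∏ k ∈ Ico m n, b k) ≤ ∏ k ∈ Ico m n, Real.exp (-(1 - b k)) :=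
          Finset.prod_le_prod (fun k _ => hb0 k) this
      _ = Real.exp (∑ k ∈ Ico m n, -(1 - b k)) := (Real.exp_sum _ _).symm
      _ = Real.exp (-(∑ k ∈ Ico m n, (1 - b k))) := by rw [Finset.sum_neg_distrib]
  -- divergence of partial sums of (1-b) over Ico m n as n → ∞
  have hdiv : ∀ m, Tendsto (fun n => ∑ k ∈ Ico m n, (1 - b k)) atTop atTop := by
    intro m
    have h1 : Tendsto (fun n => ∑ k ∈ range n, (1 - b k)) atTop atTop :=
      (not_summable_iff_tendsto_nat_atTop_of_nonneg (fun k => by linarith [hb1 k])).mp hbdiv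
    have h3 : Tendsto (fun n => ∑ k ∈ range n, (1 - b k) + -(∑ k ∈ range m, (1 - b k)))
        atTop atTop := tendsto_atTop_add_const_right atTop _ h1
    have h2 : (fun n => ∑ k ∈ range n, (1 - b k) + -(∑ k ∈ range m, (1 - b k)))
        =ᶠ[atTop] (fun n => ∑ k ∈ Ico m n, (1 - b k)) := by
      filter_upwards [eventually_ge_atTop m] with n hn
      rw [Finset.sum_Ico_eq_sub _ hn]; ring
    exact Tendsto.congr' h2 h3
  -- final epsilon argument
  rw [Metric.tendsto_atTop]
  intro ε hε
  -- choose m with tail sum < ε/2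
  have htail : Tendsto (fun m => ∑' k, c (k + m)) atTop (nhds 0) := tendsto_sum_nat_add c
  obtain ⟨m, hm⟩ : ∃ m, ∑' k, c (k + m) < ε / 2 := by
    have := htail.eventually (gt_mem_nhds (by linarith : (0:ℝ) < ε / 2))
    exact this.exists
  -- choose N with product term < ε/2 for n ≥ N
  have hP0 : Tendsto (fun n => (∏ k ∈ Ico m n, b k) * a m) atTop (nhds 0) := by
    have hE : Tendsto (fun n => Real.exp (-(∑ k ∈ Ico m n, (1 - b k))) * a m) atTop (nhds 0) := by
      have := (Real.tendsto_exp_neg_atTop_nhds_zero.comp (hdiv m)).mul_const (a m)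
      simpa using this
    apply squeeze_zero' (Eventually.of_forall (fun n => mul_nonneg (hPnn m n) (ha m)))
      (Eventually.of_forall (fun n => mul_le_mul_of_nonneg_right (hprod m n) (ha m))) hE
  obtain ⟨N, hN⟩ := (Metric.tendsto_atTop.mp hP0 (ε/2) (by linarith)).imp (fun N h => h)
  refine ⟨max m N, fun n hn => ?_⟩
  have hmn : m ≤ n := le_trans (le_max_left _ _) hn
  have hNn : N ≤ n := le_trans (le_max_right _ _) hn
  have hk := key m n hmn
  have hsum_tail : ∑ k ∈ Ico m n, c k ≤ ∑' k, c (k + m) := by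
    rw [Finset.sum_Ico_eq_sum_range]
    have hsumm : Summable (fun k => c (k + m)) := (summable_nat_add_iff m).mpr hcsum
    calc ∑ k ∈ range (n - m), c (m + k) = ∑ k ∈ range (n - m), c (k + m) := by
          apply Finset.sum_congr rfl; intro k _; rw [Nat.add_comm]
      _ ≤ ∑' k, c (k + m) := Summable.sum_le_tsum _ (fun k _ => hc0 _) hsumm
  have hPn := hN n hNn
  rw [Real.dist_eq, sub_zero] at hPn ⊢
  have : a n < ε := by
    have h1 : (∏ k ∈ Ico m n, b k) * a m < ε / 2 := lt_of_abs_lt hPn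
    linarith [hk, hsum_tail, hm]
  rw [abs_of_nonneg (ha n)]; exact this

/-- residual convergence for a family of averaged operators. -/
theorem stmt_7 {H : Type*} [NormedAddCommGroup H] [InnerProductSpace ℝ H] [CompleteSpace H]
    (α : ℕ → ℝ) (hα : ∀ n, 0 < α n ∧ α n < 1)
    (T : ℕ → H → H) (hT : ∀ n x y, ‖T n x - T n y‖ ≤ ‖x - y‖)
    (R : ℕ → H → H) (hR : ∀ n y, R n y = (1 - α n) • y + α n • T n y)
    (hfix : ∃ p : H, ∀ n, R n p = p)
    (hαinf : ∃ c : ℝ, 0 < c ∧ ∀ᶠ n in Filter.atTop, c ≤ α n)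
    (hαsum : Summable (fun n => |1 / α (n + 1) - 1 / α n|))
    (β lam : ℕ → ℝ) (u : ℕ → H)
    (hrec : ∀ n, u (n + 1) = β n • u n + lam n • (R n (β n • u n) - β n • u n))
    (hβ : ∀ n, 0 < β n ∧ β n ≤ 1)
    (hβlim : Filter.Tendsto β Filter.atTop (nhds 1))
    (hβdiv : ¬ Summable (fun n => 1 - β n))
    (hβsum : Summable (fun n => |β (n + 1) - β n|))
    (hlam : ∀ n, 0 < lam n ∧ lam n ≤ 1 / α n)
    (hlaminf : ∃ c : ℝ, 0 < c ∧ ∀ᶠ n in Filter.atTop, c ≤ lam n)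
    (hlamsum : Summable (fun n => |lam (n + 1) - lam n|))
    (hRsum : Summable (fun n => ‖R (n + 1) (β n • u n) - R n (β n • u n)‖)) :
    Filter.Tendsto (fun n => ‖u n - R n (u n)‖) Filter.atTop (nhds 0) := by
  obtain ⟨p, hp⟩ := hfix
  -- basic facts about lam * α
  have hla : ∀ n, 0 < lam n * α n ∧ lam n * α n ≤ 1 := by
    intro n
    have h1 := (hα n).1
    have h2 := (hlam n).1
    refine ⟨mul_pos h2 h1, ?_⟩
    have := (hlam n).2
    calc lam n * α n ≤ (1 / α n) * α n := by nlinarith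
      _ = 1 := by field_simp
  -- nonexpansiveness of R n
  have hRnon : ∀ n x y, ‖R n x - R n y‖ ≤ ‖x - y‖ := by
    intro n x y
    have h1 := (hα n).1
    have h2 := (hα n).2
    have : R n x - R n y = (1 - α n) • (x - y) + α n • (T n x - T n y) := by
      rw [hR n x, hR n y]; module
    rw [this]
    calc ‖(1 - α n) • (x - y) + α n • (T n x - T n y)‖
        ≤ ‖(1 - α n) • (x - y)‖ + ‖α n • (T n x - T n y)‖ := norm_add_le _ _
      _ = (1 - α n) * ‖x - y‖ + α n * ‖T n x - T n y‖ := by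
          rw [norm_smul, norm_smul, Real.norm_eq_abs, Real.norm_eq_abs,
            abs_of_nonneg (by linarith), abs_of_nonneg (by linarith)]
      _ ≤ (1 - α n) * ‖x - y‖ + α n * ‖x - y‖ := by nlinarith [hT n x y]
      _ = ‖x - y‖ := by ring
  -- the one-step operator F n x = x + lam n • (R n x - x) is nonexpansive
  have hFnon : ∀ n x y, ‖(x + lam n • (R n x - x)) - (y + lam n • (R n y - y))‖ ≤ ‖x - y‖ := by
    intro n x y
    have h1 := (hla n).1
    have h2 := (hla n).2
    have hx : ∀ z : H, z + lam n • (R n z - z) = (1 - lam n * α n) • z + (lam n * α n) • T n z := by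
      intro z; rw [hR n z]; module
    rw [hx x, hx y]
    have : (1 - lam n * α n) • x + (lam n * α n) • T n x
        - ((1 - lam n * α n) • y + (lam n * α n) • T n y)
        = (1 - lam n * α n) • (x - y) + (lam n * α n) • (T n x - T n y) := by module
    rw [this]
    calc ‖(1 - lam n * α n) • (x - y) + (lam n * α n) • (T n x - T n y)‖
        ≤ ‖(1 - lam n * α n) • (x - y)‖ + ‖(lam n * α n) • (T n x - T n y)‖ := norm_add_le _ _
      _ = (1 - lam n * α n) * ‖x - y‖ + (lam n * α n) * ‖T n x - T n y‖ := by
          rw [norm_smul, norm_smul, Real.norm_eq_abs, Real.norm_eq_abs,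
            abs_of_nonneg (by linarith), abs_of_nonneg (by linarith)]
      _ ≤ (1 - lam n * α n) * ‖x - y‖ + (lam n * α n) * ‖x - y‖ := by nlinarith [hT n x y]
      _ = ‖x - y‖ := by ring
  have hFp : ∀ n, p + lam n • (R n p - p) = p := by
    intro n; rw [hp n]; simp
  set M : ℝ := max ‖u 0 - p‖ ‖p‖ with hM
  have hM0 : 0 ≤ M := le_trans (norm_nonneg _) (le_max_left _ _)
  have hpM : ‖p‖ ≤ M := le_max_right _ _
  -- y bound helper
  have hyp : ∀ n, ‖u n - p‖ ≤ M → ‖β n • u n - p‖ ≤ M := by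
    intro n hn
    have hb1 := (hβ n).1
    have hb2 := (hβ n).2
    have : β n • u n - p = β n • (u n - p) + (β n - 1) • p := by module
    rw [this]
    calc ‖β n • (u n - p) + (β n - 1) • p‖ ≤ ‖β n • (u n - p)‖ + ‖(β n - 1) • p‖ := norm_add_le _ _
      _ = β n * ‖u n - p‖ + (1 - β n) * ‖p‖ := by
          rw [norm_smul, norm_smul, Real.norm_eq_abs, Real.norm_eq_abs,
            abs_of_pos hb1, abs_of_nonpos (by linarith), neg_sub]
      _ ≤ β n * M + (1 - β n) * M := by nlinarith
      _ = M := by ring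
  have hbound : ∀ n, ‖u n - p‖ ≤ M := by
    intro n
    induction n with
    | zero => exact le_max_left _ _
    | succ n ih =>
      have := hFnon n (β n • u n) p
      rw [hFp n, ← hrec n] at this
      exact le_trans this (hyp n ih)
  have hybound : ∀ n, ‖β n • u n - p‖ ≤ M := fun n => hyp n (hbound n)
  have hubound : ∀ n, ‖u n‖ ≤ 2 * M := by
    intro n
    calc ‖u n‖ = ‖(u n - p) + p‖ := by rw [sub_add_cancel]
      _ ≤ ‖u n - p‖ + ‖p‖ := norm_add_le _ _
      _ ≤ 2 * M := by linarith [hbound n, hpM]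
  -- bound on ‖R (n+1) y_n - y_n‖
  have hRy : ∀ n, ‖R (n + 1) (β n • u n) - β n • u n‖ ≤ 2 * M := by
    intro n
    have h : ‖R (n + 1) (β n • u n) - p‖ ≤ ‖β n • u n - p‖ := by
      have := hRnon (n + 1) (β n • u n) p
      rwa [hp (n + 1)] at this
    calc ‖R (n + 1) (β n • u n) - β n • u n‖
        ≤ ‖R (n + 1) (β n • u n) - p‖ + ‖p - β n • u n‖ :=
          norm_sub_le_norm_sub_add_norm_sub _ _ _
      _ ≤ M + M := add_le_add (h.trans (hybound n))
          (by rw [norm_sub_rev]; exact hybound n)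
      _ = 2 * M := by ring
  -- eventual bound on lam
  obtain ⟨cα, hcα, hcαev⟩ := hαinf
  obtain ⟨N₁, hN₁⟩ := eventually_atTop.mp hcαev
  have hlamb : ∀ n ≥ N₁, lam n ≤ 1 / cα := by
    intro n hn
    have h1 := (hlam n).2
    have h2 := hN₁ n hn
    have h3 := (hα n).1
    calc lam n ≤ 1 / α n := h1
      _ ≤ 1 / cα := by
        apply one_div_le_one_div_of_le hcα h2
  -- the error sequence
  set c : ℕ → ℝ := fun n => |β (n + 1) - β n| * (2 * M) + |lam (n + 1) - lam n| * (2 * M)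
      + lam n * ‖R (n + 1) (β n • u n) - R n (β n • u n)‖ with hc
  have hc0 : ∀ n, 0 ≤ c n := by
    intro n
    have := (hlam n).1
    positivity
  have hcsum : Summable c := by
    apply Summable.add
    apply Summable.add
    · exact hβsum.mul_right _
    · exact hlamsum.mul_right _
    · -- compare with hRsum, eventually
      rw [← summable_nat_add_iff N₁]
      apply Summable.of_nonneg_of_le
      · intro n
        have := (hlam (n + N₁)).1
        positivity
      · intro n
        exact mul_le_mul_of_nonneg_right (hlamb (n + N₁) (Nat.le_add_left _ _)) (norm_nonneg _)
      · exact ((summable_nat_add_iff N₁).mpr hRsum).mul_left (1 / cα)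
  -- recursion for differences
  have hdiff : ∀ n, ‖u (n + 2) - u (n + 1)‖ ≤ β (n + 1) * ‖u (n + 1) - u n‖ + c n := by
    intro n
    set y := β n • u n with hy
    set y' := β (n + 1) • u (n + 1) with hy'
    have e1 : u (n + 2) = y' + lam (n + 1) • (R (n + 1) y' - y') := hrec (n + 1)
    have e2 : u (n + 1) = y + lam n • (R n y - y) := hrec n
    have split : u (n + 2) - u (n + 1)
        = ((y' + lam (n + 1) • (R (n + 1) y' - y')) - (y + lam (n + 1) • (R (n + 1) y - y)))
          + ((lam (n + 1) - lam n) • (R (n + 1) y - y) + lam n • (R (n + 1) y - R n y)) := by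
      rw [e1, e2]; module
    have t1 : ‖(y' + lam (n + 1) • (R (n + 1) y' - y')) - (y + lam (n + 1) • (R (n + 1) y - y))‖
        ≤ ‖y' - y‖ := hFnon (n + 1) y' y
    have t2 : ‖y' - y‖ ≤ β (n + 1) * ‖u (n + 1) - u n‖ + |β (n + 1) - β n| * ‖u n‖ := by
      have : y' - y = β (n + 1) • (u (n + 1) - u n) + (β (n + 1) - β n) • u n := by
        rw [hy, hy']; module
      rw [this]
      calc ‖β (n + 1) • (u (n + 1) - u n) + (β (n + 1) - β n) • u n‖
          ≤ ‖β (n + 1) • (u (n + 1) - u n)‖ + ‖(β (n + 1) - β n) • u n‖ := norm_add_le _ _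
        _ = β (n + 1) * ‖u (n + 1) - u n‖ + |β (n + 1) - β n| * ‖u n‖ := by
            rw [norm_smul, norm_smul, Real.norm_eq_abs, Real.norm_eq_abs,
              abs_of_pos (hβ (n + 1)).1]
    have t3 : ‖(lam (n + 1) - lam n) • (R (n + 1) y - y) + lam n • (R (n + 1) y - R n y)‖
        ≤ |lam (n + 1) - lam n| * (2 * M) + lam n * ‖R (n + 1) y - R n y‖ := by
      calc ‖(lam (n + 1) - lam n) • (R (n + 1) y - y) + lam n • (R (n + 1) y - R n y)‖
          ≤ ‖(lam (n + 1) - lam n) • (R (n + 1) y - y)‖ + ‖lam n • (R (n + 1) y - R n y)‖ :=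
            norm_add_le _ _
        _ = |lam (n + 1) - lam n| * ‖R (n + 1) y - y‖ + lam n * ‖R (n + 1) y - R n y‖ := by
            rw [norm_smul, norm_smul, Real.norm_eq_abs, Real.norm_eq_abs,
              abs_of_pos (hlam n).1]
        _ ≤ |lam (n + 1) - lam n| * (2 * M) + lam n * ‖R (n + 1) y - R n y‖ := by
            have := hRy n
            have h0 : (0:ℝ) ≤ |lam (n + 1) - lam n| := abs_nonneg _
            nlinarith
    calc ‖u (n + 2) - u (n + 1)‖
        ≤ ‖(y' + lam (n + 1) • (R (n + 1) y' - y')) - (y + lam (n + 1) • (R (n + 1) y - y))‖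
          + ‖(lam (n + 1) - lam n) • (R (n + 1) y - y) + lam n • (R (n + 1) y - R n y)‖ := by
          rw [split]; exact norm_add_le _ _
      _ ≤ β (n + 1) * ‖u (n + 1) - u n‖ + |β (n + 1) - β n| * ‖u n‖
          + (|lam (n + 1) - lam n| * (2 * M) + lam n * ‖R (n + 1) y - R n y‖) :=
          add_le_add (le_trans t1 t2) t3
      _ ≤ β (n + 1) * ‖u (n + 1) - u n‖ + c n := by
          have h1 : |β (n + 1) - β n| * ‖u n‖ ≤ |β (n + 1) - β n| * (2 * M) :=
            mul_le_mul_of_nonneg_left (hubound n) (abs_nonneg _)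
          rw [hc]; dsimp only; linarith
  -- apply xu_lemma
  have hT1 : Tendsto (fun n => ‖u (n + 1) - u n‖) atTop (nhds 0) := by
    have := xu_lemma_s7 (fun n => ‖u (n + 1) - u n‖) (fun n => β (n + 1)) c
      (fun n => norm_nonneg _) (fun n => le_of_lt (hβ (n + 1)).1) (fun n => (hβ (n + 1)).2)
      (fun h => hβdiv ((summable_nat_add_iff 1).mp h))
      hc0 hcsum (fun n => hdiff n)
    exact this
  -- step 3: residual at y_n tends to 0
  have hβ1 : Tendsto (fun n => 1 - β n) atTop (nhds 0) := by
    have := (tendsto_const_nhds (x := (1:ℝ))).sub hβlim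
    simpa using this
  have hlamd : Tendsto (fun n => lam n * ‖R n (β n • u n) - β n • u n‖) atTop (nhds 0) := by
    have hineq : ∀ n, lam n * ‖R n (β n • u n) - β n • u n‖
        ≤ ‖u (n + 1) - u n‖ + (1 - β n) * (2 * M) := by
      intro n
      have e : lam n • (R n (β n • u n) - β n • u n) = (u (n + 1) - u n) + (1 - β n) • u n := by
        rw [hrec n]; module
      have : lam n * ‖R n (β n • u n) - β n • u n‖
          = ‖(u (n + 1) - u n) + (1 - β n) • u n‖ := by
        rw [← e, norm_smul, Real.norm_eq_abs, abs_of_pos (hlam n).1]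
      rw [this]
      calc ‖(u (n + 1) - u n) + (1 - β n) • u n‖
          ≤ ‖u (n + 1) - u n‖ + ‖(1 - β n) • u n‖ := norm_add_le _ _
        _ ≤ ‖u (n + 1) - u n‖ + (1 - β n) * (2 * M) := by
            rw [norm_smul, Real.norm_eq_abs, abs_of_nonneg (by linarith [(hβ n).2])]
            have h2 := hubound n
            have h3 : (0:ℝ) ≤ 1 - β n := by linarith [(hβ n).2]
            nlinarith
    have hrhs : Tendsto (fun n => ‖u (n + 1) - u n‖ + (1 - β n) * (2 * M)) atTop (nhds 0) := by
      have := hT1.add (hβ1.mul_const (2 * M))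
      simpa using this
    apply squeeze_zero'
      (Eventually.of_forall (fun n => mul_nonneg (le_of_lt (hlam n).1) (norm_nonneg _)))
      (Eventually.of_forall hineq) hrhs
  obtain ⟨cl, hcl, hclev⟩ := hlaminf
  have hd : Tendsto (fun n => ‖R n (β n • u n) - β n • u n‖) atTop (nhds 0) := by
    apply squeeze_zero' (Eventually.of_forall (fun n => norm_nonneg _))
      (g := fun n => (1 / cl) * (lam n * ‖R n (β n • u n) - β n • u n‖))
    · filter_upwards [hclev] with n hn
      have h1 := (hlam n).1
      have h2 : (0:ℝ) ≤ ‖R n (β n • u n) - β n • u n‖ := norm_nonneg _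
      rw [← sub_nonneg]
      have : (1 / cl) * (lam n * ‖R n (β n • u n) - β n • u n‖)
          - ‖R n (β n • u n) - β n • u n‖
          = ((lam n - cl) / cl) * ‖R n (β n • u n) - β n • u n‖ := by
        field_simp
      rw [this]
      apply mul_nonneg (div_nonneg (by linarith) (le_of_lt hcl)) h2
    · have := hlamd.const_mul (1 / cl)
      simpa using this
  -- conclude
  have hfin : ∀ n, ‖u n - R n (u n)‖
      ≤ 2 * ((1 - β n) * (2 * M)) + ‖R n (β n • u n) - β n • u n‖ := by
    intro n
    have huy : ‖u n - β n • u n‖ ≤ (1 - β n) * (2 * M) := by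
      have : u n - β n • u n = (1 - β n) • u n := by module
      rw [this, norm_smul, Real.norm_eq_abs, abs_of_nonneg (by linarith [(hβ n).2])]
      have h2 := hubound n
      have h3 : (0:ℝ) ≤ 1 - β n := by linarith [(hβ n).2]
      nlinarith
    calc ‖u n - R n (u n)‖
        ≤ ‖u n - β n • u n‖ + ‖β n • u n - R n (u n)‖ := norm_sub_le_norm_sub_add_norm_sub _ _ _
      _ ≤ ‖u n - β n • u n‖ + (‖β n • u n - R n (β n • u n)‖ + ‖R n (β n • u n) - R n (u n)‖) :=
          add_le_add le_rfl (norm_sub_le_norm_sub_add_norm_sub _ _ _)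
      _ ≤ (1 - β n) * (2 * M) + (‖R n (β n • u n) - β n • u n‖ + ‖β n • u n - u n‖) := by
          rw [norm_sub_rev (β n • u n) (R n (β n • u n))]
          exact add_le_add huy (add_le_add le_rfl (hRnon n _ _))
      _ ≤ 2 * ((1 - β n) * (2 * M)) + ‖R n (β n • u n) - β n • u n‖ := by
          rw [norm_sub_rev (β n • u n)]; linarith [huy]
  have hrhs2 : Tendsto (fun n => 2 * ((1 - β n) * (2 * M)) + ‖R n (β n • u n) - β n • u n‖)
      atTop (nhds 0) := by
    have := ((hβ1.mul_const (2 * M)).const_mul 2).add hd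
    simpa using this
  exact squeeze_zero' (Eventually.of_forall (fun n => norm_nonneg _))
    (Eventually.of_forall hfin) hrhs2
end

section
/- Let H be a real Hilbert space, f : H → ℝ ∪ {+∞} a proper, convex and lower semicontinuous function, B : H → H any map, x ∈ H, and γ, μ > 0. Let p ∈ H be a minimizer of y ↦ f(y) + (1/(2γ)) ‖y − (x − γ B x)‖² over H, and let q ∈ H be a minimizer of y ↦ f(y) + (1/(2μ)) ‖y − (x − μ B x)‖² over H. Then ‖p − q‖ ≤ |1 − μ/γ| ‖p − x‖. -/
/-!
Write `u = x - γ B x` and `v = x - μ B x`. Testing the minimality of `p` along the segment towards `q`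
gives the variational inequality `⟪u - p, q - p⟫ ≤ γ (f q - f p)`, and symmetrically
`⟪v - q, p - q⟫ ≤ μ (f p - f q)`. Scaling the first by `μ / γ` and adding eliminates `f`, and since
`(μ / γ) (u - p) - (v - q) = (1 - μ / γ) (p - x) + (q - p)` no longer involves `B`, this gives
`‖q - p‖² ≤ ⟪(1 - μ / γ) (x - p), q - p⟫`; Cauchy–Schwarz concludes.
-/

open Filter Topology

lemma nonneg_of_forall_nonneg_add_mul {A C : ℝ} (h : ∀ t : ℝ, 0 < t → t ≤ 1 → 0 ≤ A + t * C) :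
    0 ≤ A := by
  have hlim : Tendsto (fun t : ℝ => A + t * C) (𝓝[>] 0) (𝓝 A) := by
    have : Continuous fun t : ℝ => A + t * C := by fun_prop
    simpa using (this.tendsto 0).mono_left nhdsWithin_le_nhds
  refine ge_of_tendsto hlim ?_
  filter_upwards [Ioc_mem_nhdsGT one_pos] with t ht using h t ht.1 ht.2

lemma norm_le_of_norm_sq_le_inner {H : Type*} [NormedAddCommGroup H] [InnerProductSpace ℝ H]
    {v w : H} (h : ‖w‖ ^ 2 ≤ inner ℝ v w) : ‖w‖ ≤ ‖v‖ := by
  rcases (norm_nonneg w).eq_or_lt with hw | hw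
  · rw [← hw]; positivity
  · refine le_of_mul_le_mul_right ?_ hw
    calc ‖w‖ * ‖w‖ = ‖w‖ ^ 2 := (sq _).symm
      _ ≤ inner ℝ v w := h
      _ ≤ ‖v‖ * ‖w‖ := real_inner_le_norm v w

section Prox

variable {H : Type*} [NormedAddCommGroup H]

/-- `p = prox_{γf} z`. -/
def IsProxPoint (f : H → EReal) (γ : ℝ) (z p : H) : Prop :=
  ∀ y : H, f p + ((1 / (2 * γ) * ‖p - z‖ ^ 2 : ℝ) : EReal) ≤
    f y + ((1 / (2 * γ) * ‖y - z‖ ^ 2 : ℝ) : EReal)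

variable {f : H → EReal} {γ : ℝ} {z p : H}

lemma IsProxPoint.ne_top (hp : IsProxPoint f γ z p) {y : H} (hy : f y ≠ ⊤) : f p ≠ ⊤ := by
  intro h
  have := hp y
  rw [h, EReal.top_add_coe] at this
  exact lt_irrefl _ (this.trans_lt (EReal.add_lt_top hy (EReal.coe_ne_top _)))

lemma IsProxPoint.le_segment [NormedSpace ℝ H]
    (hconv : ∀ z w : H, ∀ t : ℝ, 0 ≤ t → t ≤ 1 →
      f (t • z + (1 - t) • w) ≤ (t : EReal) * f z + ((1 - t : ℝ) : EReal) * f w)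
    (hp : IsProxPoint f γ z p) {a b : ℝ} (ha : f p = a) {y : H} (hb : f y = b)
    {t : ℝ} (ht₀ : 0 ≤ t) (ht₁ : t ≤ 1) :
    a + 1 / (2 * γ) * ‖p - z‖ ^ 2 ≤
      t * b + (1 - t) * a + 1 / (2 * γ) * ‖(p - z) + t • (y - p)‖ ^ 2 := by
  have hmin := (hp (t • y + (1 - t) • p)).trans (add_le_add_left (hconv y p t ht₀ ht₁) _)
  rw [ha, hb, show t • y + (1 - t) • p - z = (p - z) + t • (y - p) by module] at hmin
  exact_mod_cast hmin

variable [InnerProductSpace ℝ H]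

/-- The subgradient inequality `z - p ∈ γ ∂f(p)`. -/
lemma IsProxPoint.inner_le
    (hconv : ∀ z w : H, ∀ t : ℝ, 0 ≤ t → t ≤ 1 →
      f (t • z + (1 - t) • w) ≤ (t : EReal) * f z + ((1 - t : ℝ) : EReal) * f w)
    (hγ : 0 < γ) (hp : IsProxPoint f γ z p) {a b : ℝ} (ha : f p = a) {y : H} (hb : f y = b) :
    inner ℝ (z - p) (y - p) ≤ γ * (b - a) := by
  set I := inner ℝ (p - z) (y - p)
  suffices 0 ≤ (b - a) + I / γ by
    have hI : inner ℝ (z - p) (y - p) = -I := by rw [← inner_neg_left, neg_sub]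
    rw [hI]
    have := mul_nonneg hγ.le this
    rw [mul_add, mul_div_cancel₀ _ hγ.ne'] at this
    linarith
  refine nonneg_of_forall_nonneg_add_mul (C := 1 / (2 * γ) * ‖y - p‖ ^ 2) fun t ht₀ ht₁ => ?_
  have hseg := hp.le_segment hconv ha hb ht₀.le ht₁
  rw [norm_add_sq_real, real_inner_smul_right, norm_smul, mul_pow, Real.norm_eq_abs, sq_abs]
    at hseg
  have hexp : 0 ≤ t * ((b - a) + I / γ + t * (1 / (2 * γ) * ‖y - p‖ ^ 2)) := by
    field_simp at hseg ⊢
    nlinarith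
  exact nonneg_of_mul_nonneg_right hexp ht₀

end Prox

theorem stmt_10_general {H : Type*} [NormedAddCommGroup H] [InnerProductSpace ℝ H]
    (f : H → EReal)
    (hproper : ∃ z : H, f z ≠ ⊤) (hreal : ∀ z : H, f z ≠ ⊥)
    (hconv : ∀ z w : H, ∀ t : ℝ, 0 ≤ t → t ≤ 1 →
      f (t • z + (1 - t) • w) ≤ (t : EReal) * f z + ((1 - t : ℝ) : EReal) * f w)
    (B : H → H) (x : H) (γ μ : ℝ) (hγ : 0 < γ) (hμ : 0 < μ)
    (p q : H)
    (hp : ∀ y : H,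
      f p + ((1 / (2 * γ) * ‖p - (x - γ • B x)‖ ^ 2 : ℝ) : EReal) ≤
      f y + ((1 / (2 * γ) * ‖y - (x - γ • B x)‖ ^ 2 : ℝ) : EReal))
    (hq : ∀ y : H,
      f q + ((1 / (2 * μ) * ‖q - (x - μ • B x)‖ ^ 2 : ℝ) : EReal) ≤
      f y + ((1 / (2 * μ) * ‖y - (x - μ • B x)‖ ^ 2 : ℝ) : EReal)) :
    ‖p - q‖ ≤ |1 - μ / γ| * ‖p - x‖ := by
  have hp : IsProxPoint f γ (x - γ • B x) p := hp
  have hq : IsProxPoint f μ (x - μ • B x) q := hq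
  obtain ⟨z₀, hz₀⟩ := hproper
  obtain ⟨a, ha⟩ : ∃ a : ℝ, f p = a := ⟨_, (EReal.coe_toReal (hp.ne_top hz₀) (hreal p)).symm⟩
  obtain ⟨b, hb⟩ : ∃ b : ℝ, f q = b := ⟨_, (EReal.coe_toReal (hq.ne_top hz₀) (hreal q)).symm⟩
  have vi_p := hp.inner_le hconv hγ ha hb
  have vi_q := hq.inner_le hconv hμ hb ha
  have hB_free : (μ / γ) • ((x - γ • B x) - p) - ((x - μ • B x) - q) =
      (1 - μ / γ) • (p - x) + (q - p) := by
    match_scalars <;> field_simp <;> ring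
  have hsq : ‖q - p‖ ^ 2 ≤ inner ℝ ((1 - μ / γ) • (x - p)) (q - p) := by
    have hsum : inner ℝ ((μ / γ) • ((x - γ • B x) - p) - ((x - μ • B x) - q)) (q - p) ≤ 0 := by
      have hrev : inner ℝ (x - μ • B x - q) (q - p) = -inner ℝ (x - μ • B x - q) (p - q) := by
        rw [← inner_neg_right, neg_sub]
      rw [inner_sub_left, real_inner_smul_left, hrev]
      have := mul_le_mul_of_nonneg_left vi_p (div_pos hμ hγ).le
      rw [← mul_assoc, div_mul_cancel₀ _ hγ.ne'] at this
      linarith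
    rw [hB_free, inner_add_left, real_inner_self_eq_norm_sq, ← neg_sub x p, smul_neg,
      inner_neg_left] at hsum
    linarith
  have := norm_le_of_norm_sq_le_inner hsq
  rwa [norm_smul, Real.norm_eq_abs, norm_sub_rev x p, norm_sub_rev q p] at this

/-- resolvent-type identity for proximal points with two step sizes. -/
theorem stmt_10 {H : Type*} [NormedAddCommGroup H] [InnerProductSpace ℝ H] [CompleteSpace H]
    (f : H → EReal)
    (hproper : ∃ z : H, f z ≠ ⊤) (hreal : ∀ z : H, f z ≠ ⊥)
    (hconv : ∀ z w : H, ∀ t : ℝ, 0 ≤ t → t ≤ 1 →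
      f (t • z + (1 - t) • w) ≤ (t : EReal) * f z + ((1 - t : ℝ) : EReal) * f w)
    (hlsc : LowerSemicontinuous f)
    (B : H → H) (x : H) (γ μ : ℝ) (hγ : 0 < γ) (hμ : 0 < μ)
    (p q : H)
    (hp : ∀ y : H,
      f p + ((1 / (2 * γ) * ‖p - (x - γ • B x)‖ ^ 2 : ℝ) : EReal) ≤
      f y + ((1 / (2 * γ) * ‖y - (x - γ • B x)‖ ^ 2 : ℝ) : EReal))
    (hq : ∀ y : H,
      f q + ((1 / (2 * μ) * ‖q - (x - μ • B x)‖ ^ 2 : ℝ) : EReal) ≤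
      f y + ((1 / (2 * μ) * ‖y - (x - μ • B x)‖ ^ 2 : ℝ) : EReal)) :
    ‖p - q‖ ≤ |1 - μ / γ| * ‖p - x‖ :=
  stmt_10_general f hproper hreal hconv B x γ μ hγ hμ p q hp hq
end

section
/- Let H be a real Hilbert space, f : H → ℝ ∪ {+∞} a proper, convex and lower semicontinuous function, and g : H → ℝ a convex Fréchet differentiable function whose gradient ∇g is β-cocoercive for some β > 0, i.e., ⟨x − y, ∇g(x) − ∇g(y)⟩ ≥ β ‖∇g(x) − ∇g(y)‖² for all x, y ∈ H. Suppose argmin(f+g) ≠ ∅. Let (γ_k)_{k≥0} be positive reals with inf_{k≥0} γ_k > 0, and let (y_k)_{k≥0} be a sequence in H converging weakly to some x ∈ H (i.e., ⟨y_k, z⟩ → ⟨x, z⟩ for all z ∈ H) such that y_k − prox_{γ_k f}(y_k − γ_k ∇g(y_k)) → 0 strongly as k → +∞. Then x ∈ argmin(f+g). -/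
/-!
Put `v k = (γ k)⁻¹ • (y k - p k) + (∇g (p k) - ∇g (y k))`. The optimality condition of the
proximal step says `(γ k)⁻¹ • (y k - p k) - ∇g (y k) ∈ ∂f (p k)`, and `∇g (p k) ∈ ∂g (p k)` by
convexity of `g`, so `v k` is a subgradient of `f + g` at `p k`. Since `γ` is bounded below and
cocoercivity makes `∇g` `β⁻¹`-Lipschitz, `v k → 0`; as `p k ⇀ x` is bounded, this gives
`(f + g) (p k) ≤ (f + g) z + o(1)` for every `z`. Sublevel sets of the convex lower
semicontinuous function `f + g` are closed and convex, hence weakly sequentially closed by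
Hahn–Banach, so `(f + g) x ≤ (f + g) z`.
-/

open scoped RealInnerProductSpace
open Filter Set Topology

theorem EReal.exists_eq_coe_of_add_coe_le {a : EReal} {r M : ℝ} (ha : a ≠ ⊥)
    (h : a + r ≤ M) : ∃ s : ℝ, a = s := by
  refine ⟨a.toReal, (EReal.coe_toReal ?_ ha).symm⟩
  rintro rfl
  simp at h

theorem LowerSemicontinuous.isClosed_setOf_add_coe_le {α : Type*} [TopologicalSpace α]
    {f : α → EReal} (hf : LowerSemicontinuous f) {g : α → ℝ} (hg : Continuous g) (M : ℝ) :
    IsClosed {w | f w + (g w : EReal) ≤ M} :=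
  (hf.add' (continuous_coe_real_ereal.comp hg).lowerSemicontinuous fun _ =>
    EReal.continuousAt_add (Or.inr (EReal.coe_ne_bot _))
      (Or.inr (EReal.coe_ne_top _))).isClosed_preimage M

section

variable {H : Type*} [NormedAddCommGroup H] [InnerProductSpace ℝ H]

theorem ConvexOn.add_inner_le_of_hasGradientAt [CompleteSpace H] {g : H → ℝ} {g' p : H}
    (hg : ConvexOn ℝ univ g) (hg' : HasGradientAt g g' p) (w : H) :
    g p + ⟪g', w - p⟫ ≤ g w := by
  have hline : HasDerivAt (g ∘ (AffineMap.lineMap p w : ℝ →ᵃ[ℝ] H)) ⟪g', w - p⟫ 0 := by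
    have hp : AffineMap.lineMap p w (0 : ℝ) = p := AffineMap.lineMap_apply_zero p w
    have := (hp ▸ hg'.hasFDerivAt).comp_hasDerivAt (0 : ℝ)
      (AffineMap.hasDerivAt_lineMap (a := p) (b := w))
    simpa only [InnerProductSpace.toDual_apply_apply] using this
  have := (hg.comp_affineMap (AffineMap.lineMap p w)).le_slope_of_hasDerivAt
    (mem_univ 0) (mem_univ 1) one_pos hline
  simp only [slope_def_field, Function.comp_apply, AffineMap.lineMap_apply_one,
    AffineMap.lineMap_apply_zero, sub_zero, div_one] at this
  linarith

theorem mul_norm_sub_le_of_cocoercive {T : H → H} {β : ℝ}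
    (hT : ∀ z w, ⟪z - w, T z - T w⟫ ≥ β * ‖T z - T w‖ ^ 2) (z w : H) :
    β * ‖T z - T w‖ ≤ ‖z - w‖ := by
  have hCS := real_inner_le_norm (z - w) (T z - T w)
  rcases (norm_nonneg (T z - T w)).eq_or_lt with h0 | hpos
  · rw [← h0, mul_zero]; exact norm_nonneg _
  · nlinarith [hT z w]

theorem apply_smul_add_smul_le_coe {f : H → EReal}
    (hconv : ∀ z w : H, ∀ t : ℝ, 0 ≤ t → t ≤ 1 →
      f (t • z + (1 - t) • w) ≤ (t : EReal) * f z + ((1 - t : ℝ) : EReal) * f w)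
    {z w : H} {a b t : ℝ} (hz : f z = a) (hw : f w = b) (ht₀ : 0 ≤ t) (ht₁ : t ≤ 1) :
    f (t • z + (1 - t) • w) ≤ ((t * a + (1 - t) * b : ℝ) : EReal) := by
  simpa only [hz, hw, EReal.coe_add, EReal.coe_mul] using hconv z w t ht₀ ht₁

theorem add_inner_le_of_prox {f : H → EReal}
    (hconv : ∀ z w : H, ∀ t : ℝ, 0 ≤ t → t ≤ 1 →
      f (t • z + (1 - t) • w) ≤ (t : EReal) * f z + ((1 - t : ℝ) : EReal) * f w)
    {γ : ℝ} (hγ : 0 < γ) {u p : H}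
    (hp : ∀ w : H, f p + ((1 / (2 * γ) * ‖p - u‖ ^ 2 : ℝ) : EReal) ≤
      f w + ((1 / (2 * γ) * ‖w - u‖ ^ 2 : ℝ) : EReal))
    {a b : ℝ} (ha : f p = a) {w : H} (hb : f w = b) :
    a + γ⁻¹ * ⟪u - p, w - p⟫ ≤ b := by
  -- compare `p` with the points `p + t • (w - p)` of the segment and let `t → 0⁺`
  have hstep : ∀ t ∈ Ioc (0 : ℝ) 1,
      a + γ⁻¹ * ⟪u - p, w - p⟫ ≤ b + 1 / (2 * γ) * ‖w - p‖ ^ 2 * t := by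
    rintro t ⟨ht₀, ht₁⟩
    have hmin := (hp (t • w + (1 - t) • p)).trans
      (add_le_add_left (apply_smul_add_smul_le_coe hconv hb ha ht₀.le ht₁) _)
    rw [ha, ← EReal.coe_add, ← EReal.coe_add, EReal.coe_le_coe_iff] at hmin
    have hexpand : ‖t • w + (1 - t) • p - u‖ ^ 2
        = ‖p - u‖ ^ 2 - 2 * t * ⟪u - p, w - p⟫ + t ^ 2 * ‖w - p‖ ^ 2 := by
      rw [show t • w + (1 - t) • p - u = (p - u) + t • (w - p) by module, norm_add_sq_real,
        real_inner_smul_right, norm_smul, mul_pow, Real.norm_eq_abs, sq_abs,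
        ← neg_sub u p, inner_neg_left]
      ring
    rw [hexpand] at hmin
    have : t * (a + γ⁻¹ * ⟪u - p, w - p⟫) ≤ t * (b + 1 / (2 * γ) * ‖w - p‖ ^ 2 * t) := by
      field_simp at hmin ⊢
      nlinarith
    exact le_of_mul_le_mul_left this ht₀
  have hlim : Tendsto (fun t => b + 1 / (2 * γ) * ‖w - p‖ ^ 2 * t) (𝓝[>] 0) (𝓝 b) := by
    have : Continuous (fun t : ℝ => b + 1 / (2 * γ) * ‖w - p‖ ^ 2 * t) := by fun_prop
    simpa using (this.tendsto 0).mono_left nhdsWithin_le_nhds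
  exact ge_of_tendsto hlim (eventually_of_mem (Ioc_mem_nhdsGT one_pos) hstep)

theorem add_inner_le_of_forwardBackward [CompleteSpace H] {f : H → EReal}
    (hconv : ∀ z w : H, ∀ t : ℝ, 0 ≤ t → t ≤ 1 →
      f (t • z + (1 - t) • w) ≤ (t : EReal) * f z + ((1 - t : ℝ) : EReal) * f w)
    {g : H → ℝ} (hg : ConvexOn ℝ univ g) {g' : H → H} {γ : ℝ} (hγ : 0 < γ) {y p : H}
    (hg'p : HasGradientAt g (g' p) p)
    (hp : ∀ w : H, f p + ((1 / (2 * γ) * ‖p - (y - γ • g' y)‖ ^ 2 : ℝ) : EReal) ≤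
      f w + ((1 / (2 * γ) * ‖w - (y - γ • g' y)‖ ^ 2 : ℝ) : EReal))
    {a b : ℝ} (ha : f p = a) {z : H} (hb : f z = b) :
    a + g p + ⟪γ⁻¹ • (y - p) + (g' p - g' y), z - p⟫ ≤ b + g z := by
  have hprox := add_inner_le_of_prox hconv hγ hp ha hb
  have hgrad := hg.add_inner_le_of_hasGradientAt hg'p z
  have hsplit : ⟪γ⁻¹ • (y - p) + (g' p - g' y), z - p⟫
      = γ⁻¹ * ⟪y - γ • g' y - p, z - p⟫ + ⟪g' p, z - p⟫ := by
    rw [sub_right_comm, inner_sub_left, real_inner_smul_left, inner_add_left, inner_sub_left,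
      real_inner_smul_left, mul_sub, inv_mul_cancel_left₀ hγ.ne']
    ring
  linarith

theorem convex_setOf_add_coe_le {f : H → EReal} (hreal : ∀ z, f z ≠ ⊥)
    (hconv : ∀ z w : H, ∀ t : ℝ, 0 ≤ t → t ≤ 1 →
      f (t • z + (1 - t) • w) ≤ (t : EReal) * f z + ((1 - t : ℝ) : EReal) * f w)
    {g : H → ℝ} (hg : ConvexOn ℝ univ g) (M : ℝ) :
    Convex ℝ {w | f w + (g w : EReal) ≤ M} := by
  intro w₁ hw₁ w₂ hw₂ a b ha hb hab
  obtain rfl : b = 1 - a := by linarith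
  obtain ⟨r₁, hr₁⟩ := EReal.exists_eq_coe_of_add_coe_le (hreal w₁) hw₁
  obtain ⟨r₂, hr₂⟩ := EReal.exists_eq_coe_of_add_coe_le (hreal w₂) hw₂
  have hf := apply_smul_add_smul_le_coe hconv hr₁ hr₂ ha (by linarith)
  have hg' := hg.2 (mem_univ w₁) (mem_univ w₂) ha hb hab
  simp only [mem_ofPred_eq, hr₁, hr₂, ← EReal.coe_add, EReal.coe_le_coe_iff,
    smul_eq_mul] at hw₁ hw₂ hg' ⊢
  set q := a • w₁ + (1 - a) • w₂
  calc f q + (g q : EReal) ≤ ((a * r₁ + (1 - a) * r₂ : ℝ) : EReal) + (g q : EReal) := by gcongr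
    _ ≤ M := by
      rw [← EReal.coe_add, EReal.coe_le_coe_iff]
      nlinarith

theorem Convex.mem_of_tendsto_inner [CompleteSpace H] {s : Set H} (hs : Convex ℝ s)
    (hs' : IsClosed s) {p : ℕ → H} {x : H}
    (hweak : ∀ z, Tendsto (fun k => ⟪p k, z⟫) atTop (𝓝 ⟪x, z⟫))
    (hp : ∀ᶠ k in atTop, p k ∈ s) : x ∈ s := by
  by_contra hx
  obtain ⟨φ, u, hφx, hφs⟩ := geometric_hahn_banach_point_closed hs hs' hx
  have hφ : ∀ w, φ w = ⟪w, (InnerProductSpace.toDual ℝ H).symm φ⟫ := fun w => by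
    rw [real_inner_comm, InnerProductSpace.toDual_symm_apply]
  have hlim : Tendsto (fun k => φ (p k)) atTop (𝓝 (φ x)) := by
    simpa only [hφ] using hweak _
  exact hφx.not_ge (ge_of_tendsto hlim (hp.mono fun k hk => (hφs _ hk).le))

theorem exists_norm_le_of_tendsto_inner [CompleteSpace H] {y : ℕ → H} {x : H}
    (hweak : ∀ z, Tendsto (fun k => ⟪y k, z⟫) atTop (𝓝 ⟪x, z⟫)) :
    ∃ C, ∀ k, ‖y k‖ ≤ C := by
  have hpointwise : ∀ z, ∃ C, ∀ k, ‖InnerProductSpace.toDual ℝ H (y k) z‖ ≤ C := fun z => by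
    obtain ⟨C, hC⟩ := (hweak z).norm.isBoundedUnder_le.bddAbove_range
    exact ⟨C, fun k => by simpa using hC (mem_range_self k)⟩
  obtain ⟨C, hC⟩ := banach_steinhaus hpointwise
  exact ⟨C, fun k => by simpa using hC k⟩

theorem tendsto_inner_zero_of_norm_le {v w : ℕ → H} (hv : Tendsto v atTop (𝓝 0)) {C : ℝ}
    (hw : ∀ k, ‖w k‖ ≤ C) : Tendsto (fun k => ⟪v k, w k⟫) atTop (𝓝 0) := by
  refine squeeze_zero_norm (fun k => (norm_inner_le_norm _ _).trans ?_)
    (by simpa using hv.norm.mul_const C)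
  exact mul_le_mul_of_nonneg_left (hw k) (norm_nonneg _)

theorem tendsto_forwardBackward_subgradient {T : H → H} {β : ℝ} (hβ : 0 < β)
    (hT : ∀ z w, ⟪z - w, T z - T w⟫ ≥ β * ‖T z - T w‖ ^ 2) {γ : ℕ → ℝ} {c : ℝ} (hc : 0 < c)
    (hγ : ∀ k, c ≤ γ k) {y p : ℕ → H} (hres : Tendsto (fun k => y k - p k) atTop (𝓝 0)) :
    Tendsto (fun k => (γ k)⁻¹ • (y k - p k) + (T (p k) - T (y k))) atTop (𝓝 0) := by
  refine squeeze_zero_norm (a := fun k => (c⁻¹ + β⁻¹) * ‖y k - p k‖) (fun k => ?_)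
    (by simpa using hres.norm.const_mul (c⁻¹ + β⁻¹))
  have hstep : ‖(γ k)⁻¹ • (y k - p k)‖ ≤ c⁻¹ * ‖y k - p k‖ := by
    rw [norm_smul, Real.norm_of_nonneg (inv_nonneg.2 (hc.trans_le (hγ k)).le)]
    gcongr
    exact hγ k
  have hlip : ‖T (p k) - T (y k)‖ ≤ β⁻¹ * ‖y k - p k‖ := by
    rw [le_inv_mul_iff₀ hβ, norm_sub_rev (y k)]
    exact mul_norm_sub_le_of_cocoercive hT _ _
  calc _ ≤ ‖(γ k)⁻¹ • (y k - p k)‖ + ‖T (p k) - T (y k)‖ := norm_add_le _ _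
    _ ≤ (c⁻¹ + β⁻¹) * ‖y k - p k‖ := by linarith

end

theorem stmt_12_general {H : Type*} [NormedAddCommGroup H] [InnerProductSpace ℝ H] [CompleteSpace H]
    (f : H → EReal)
    (hreal : ∀ z : H, f z ≠ ⊥)
    (hconv : ∀ z w : H, ∀ t : ℝ, 0 ≤ t → t ≤ 1 →
      f (t • z + (1 - t) • w) ≤ (t : EReal) * f z + ((1 - t : ℝ) : EReal) * f w)
    (hlsc : LowerSemicontinuous f)
    (g : H → ℝ) (hgconv : ConvexOn ℝ Set.univ g)
    (g' : H → H) (hg' : ∀ z : H, HasGradientAt g (g' z) z)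
    (bet : ℝ) (hbet : 0 < bet)
    (hcoco : ∀ z w : H, ⟪z - w, g' z - g' w⟫ ≥ bet * ‖g' z - g' w‖ ^ 2)
    (γ : ℕ → ℝ) (hγpos : ∀ k, 0 < γ k)
    (hγinf : ∃ c : ℝ, 0 < c ∧ ∀ k, c ≤ γ k)
    (y : ℕ → H) (x : H)
    (hweak : ∀ z : H, Filter.Tendsto (fun k => ⟪y k, z⟫) Filter.atTop (nhds ⟪x, z⟫))
    (p : ℕ → H)
    -- `p k` is the proximal point `prox_{γ_k f}(y_k - γ_k ∇g(y_k))`: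
    (hp : ∀ k, ∀ w : H,
      f (p k) + ((1 / (2 * γ k) * ‖p k - (y k - γ k • g' (y k))‖ ^ 2 : ℝ) : EReal) ≤
      f w + ((1 / (2 * γ k) * ‖w - (y k - γ k • g' (y k))‖ ^ 2 : ℝ) : EReal))
    (hres : Filter.Tendsto (fun k => y k - p k) Filter.atTop (nhds 0)) :
    ∀ z : H, f x + ((g x : ℝ) : EReal) ≤ f z + ((g z : ℝ) : EReal) := by
  obtain ⟨c, hc, hcγ⟩ := hγinf
  set v := fun k => (γ k)⁻¹ • (y k - p k) + (g' (p k) - g' (y k))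
  have hv : Tendsto v atTop (𝓝 0) := tendsto_forwardBackward_subgradient hbet hcoco hc hcγ hres
  have hpweak : ∀ z, Tendsto (fun k => ⟪p k, z⟫) atTop (𝓝 ⟪x, z⟫) := fun z => by
    simpa [inner_sub_left] using (hweak z).sub (hres.inner (tendsto_const_nhds (x := z)))
  obtain ⟨C, hC⟩ := exists_norm_le_of_tendsto_inner hpweak
  have hgcont : Continuous g := continuous_iff_continuousAt.2 fun z => (hg' z).continuousAt
  intro z
  by_cases hfz : f z = ⊤
  · simp [hfz]
  obtain ⟨b, hb⟩ : ∃ b : ℝ, f z = b := ⟨_, (EReal.coe_toReal hfz (hreal z)).symm⟩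
  have hdescent : ∀ k, f (p k) + g (p k) ≤ ((b + g z - ⟪v k, z - p k⟫ : ℝ) : EReal) := by
    intro k
    obtain ⟨a, ha⟩ := EReal.exists_eq_coe_of_add_coe_le (hreal _)
      ((hp k z).trans_eq (by rw [hb, ← EReal.coe_add]))
    rw [ha, ← EReal.coe_add, EReal.coe_le_coe_iff]
    linarith [add_inner_le_of_forwardBackward hconv hgconv (hγpos k) (hg' _) (hp k) ha hb]
  have herr : Tendsto (fun k => ⟪v k, z - p k⟫) atTop (𝓝 0) :=
    tendsto_inner_zero_of_norm_le hv fun k => (norm_sub_le _ _).trans (add_le_add_right (hC k) _)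
  rw [hb, ← EReal.coe_add, ← EReal.le_of_forall_lt_iff_le]
  intro r hr
  rw [EReal.coe_lt_coe_iff] at hr
  refine (convex_setOf_add_coe_le hreal hconv hgconv r).mem_of_tendsto_inner
    (hlsc.isClosed_setOf_add_coe_le hgcont r) hpweak ?_
  filter_upwards [herr.eventually (lt_mem_nhds (sub_neg.2 hr))] with k hk
  exact (hdescent k).trans (EReal.coe_le_coe_iff.2 (by linarith))

/-- the proximal-gradient family fulfils the asymptotic fixed-point
condition: weak limits of sequences with vanishing residuals minimize `f + g`. -/
theorem stmt_12 {H : Type*} [NormedAddCommGroup H] [InnerProductSpace ℝ H] [CompleteSpace H]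
    (f : H → EReal)
    (hproper : ∃ z : H, f z ≠ ⊤) (hreal : ∀ z : H, f z ≠ ⊥)
    (hconv : ∀ z w : H, ∀ t : ℝ, 0 ≤ t → t ≤ 1 →
      f (t • z + (1 - t) • w) ≤ (t : EReal) * f z + ((1 - t : ℝ) : EReal) * f w)
    (hlsc : LowerSemicontinuous f)
    (g : H → ℝ) (hgconv : ConvexOn ℝ Set.univ g)
    (g' : H → H) (hg' : ∀ z : H, HasGradientAt g (g' z) z)
    (bet : ℝ) (hbet : 0 < bet)
    (hcoco : ∀ z w : H, ⟪z - w, g' z - g' w⟫ ≥ bet * ‖g' z - g' w‖ ^ 2)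
    (hargmin : ∃ y : H, ∀ z : H, f y + ((g y : ℝ) : EReal) ≤ f z + ((g z : ℝ) : EReal))
    (γ : ℕ → ℝ) (hγpos : ∀ k, 0 < γ k)
    (hγinf : ∃ c : ℝ, 0 < c ∧ ∀ k, c ≤ γ k)
    (y : ℕ → H) (x : H)
    (hweak : ∀ z : H, Filter.Tendsto (fun k => ⟪y k, z⟫) Filter.atTop (nhds ⟪x, z⟫))
    (p : ℕ → H)
    -- `p k` is the proximal point `prox_{γ_k f}(y_k - γ_k ∇g(y_k))`:
    (hp : ∀ k, ∀ w : H,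
      f (p k) + ((1 / (2 * γ k) * ‖p k - (y k - γ k • g' (y k))‖ ^ 2 : ℝ) : EReal) ≤
      f w + ((1 / (2 * γ k) * ‖w - (y k - γ k • g' (y k))‖ ^ 2 : ℝ) : EReal))
    (hres : Filter.Tendsto (fun k => y k - p k) Filter.atTop (nhds 0)) :
    ∀ z : H, f x + ((g x : ℝ) : EReal) ≤ f z + ((g z : ℝ) : EReal) :=
  stmt_12_general f hreal hconv hlsc g hgconv g' hg' bet hbet hcoco γ hγpos hγinf y x hweak p hp
    hres
end
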